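/- arXiv:0911.0098 — 7 statements merged into one kernel-verified Lean document; each statement's English description precedes it below -/
import Mathlib

section
/- Let {E*_i}_{i=0}^d be a system of mutually orthogonal idempotents in End(V), and let A ∈ End(V) satisfy E*_i A E*_j = 0 if |i−j| > 1 and E*_i A E*_j ≠ 0 if |i−j| = 1 (0 ≤ i, j ≤ d). Then the (d+1)^2 elements A^r E*_0 A^s (0 ≤ r, s ≤ d) form a basis for End(V) as a K-vector space. -/
/-!
Inserting `1 = ∑ₖ E*ₖ` between the factors of `A ^ r` writes `E*ᵢ A ^ r E*ⱼ` as a sum over walks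
`i = k₀, k₁, …, k_r = j` of products of the `E*_{k_t} A E*_{k_{t+1}}`. Since `A` is tridiagonal only
walks with steps of length at most one survive, so `E*ᵢ A ^ r E*ⱼ = 0` for `r < |i - j|`, while for
`r = |i - j|` exactly the monotone walk survives. Its product is nonzero because `X E*ₖ Y ≠ 0`
whenever `X E*ₖ ≠ 0 ≠ E*ₖ Y` and `E*ₖ` has rank one.

Hence `E*ᵢ (A ^ r E*₀ A ^ s) E*ⱼ = (E*ᵢ A ^ r E*₀) (E*₀ A ^ s E*ⱼ)` vanishes unless `i ≤ r` and
`j ≤ s`, and is nonzero for `(r, s) = (i, j)`. The family is thus triangular, hence linearly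
independent, and it has `(d + 1) ^ 2 = dim End(V)` members.
-/

open Module

theorem linearIndependent_of_triangular {K M N ι : Type*} [DivisionRing K]
    [AddCommGroup M] [Module K M] [AddCommGroup N] [Module K N] [Fintype ι] [PartialOrder ι]
    (v : ι → M) (f : ι → M →ₗ[K] N) (h_zero : ∀ i j, ¬i ≤ j → f i (v j) = 0)
    (h_diag : ∀ i, f i (v i) ≠ 0) : LinearIndependent K v := by
  classical
  rw [Fintype.linearIndependent_iff]
  intro c hc i
  induction i using WellFoundedGT.induction with
  | _ i ih =>
    have h_apply : ∑ j, c j • f i (v j) = c i • f i (v i) := by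
      refine Finset.sum_eq_single i (fun j _ hji => ?_) (by simp)
      by_cases hij : i ≤ j
      · rw [ih j (lt_of_le_of_ne hij (Ne.symm hji)), zero_smul]
      · rw [h_zero i j hij, smul_zero]
    have h0 := congrArg (f i) hc
    rw [map_sum, map_zero] at h0
    simp only [map_smul, h_apply] at h0
    exact (smul_eq_zero.mp h0).resolve_right (h_diag i)

section ModuleEnd

variable {K V : Type*} [DivisionRing K] [AddCommGroup V] [Module K V]

theorem Module.End.mul_mul_ne_zero_of_finrank_range_eq_one {e x y : Module.End K V}
    (he : finrank K (LinearMap.range e) = 1) (hx : x * e ≠ 0) (hy : e * y ≠ 0) :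
    x * e * y ≠ 0 := by
  obtain ⟨v, hv⟩ := DFunLike.ne_iff.mp hy
  obtain ⟨w, hw⟩ := DFunLike.ne_iff.mp hx
  obtain ⟨c, hc⟩ := (finrank_eq_one_iff_of_nonzero' (⟨e (y v), y v, rfl⟩ : LinearMap.range e)
    (by simpa [Subtype.ext_iff] using hv)).mp he ⟨e w, w, rfl⟩
  have hc' : c • e (y v) = e w := congrArg Subtype.val hc
  intro h
  apply hw
  calc (x * e) w = x (c • e (y v)) := by rw [Module.End.mul_apply, hc']
    _ = c • (x * e * y) v := by simp
    _ = 0 := by simp [h]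

theorem CompleteOrthogonalIdempotents.of_card_eq_finrank {ι : Type*} [Fintype ι]
    [FiniteDimensional K V] {e : ι → Module.End K V} (he : OrthogonalIdempotents e)
    (hne : ∀ i, e i ≠ 0) (hcard : Fintype.card ι = finrank K V) :
    CompleteOrthogonalIdempotents e := by
  classical
  choose x hx using fun i => DFunLike.ne_iff.mp (hne i)
  set v := fun i => e i (x i)
  have hv : ∀ i j, e j (v i) = if j = i then v i else 0 := fun i j => by
    rw [← Module.End.mul_apply, he.mul_eq]
    split_ifs with h <;> simp [h, v]
  have hli : LinearIndependent K v := by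
    refine Fintype.linearIndependent_iff.mpr fun c hc j => ?_
    have h0 := congrArg (e j) hc
    simp only [map_sum, map_smul, hv, smul_ite, smul_zero, Finset.sum_ite_eq, Finset.mem_univ,
      if_true, map_zero] at h0
    exact (smul_eq_zero.mp h0).resolve_right (hx j)
  refine ⟨he, LinearMap.ext_on_range (hli.span_eq_top_of_card_eq_finrank' hcard) fun i => ?_⟩
  simp [hv]

end ModuleEnd

theorem CompleteOrthogonalIdempotents.mul_mul_mul_eq_sum {R ι : Type*} [Semiring R] [Fintype ι]
    {e : ι → R} (he : CompleteOrthogonalIdempotents e) (x a b y : R) :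
    x * (a * b) * y = ∑ k, x * a * e k * (e k * b * y) := by
  calc x * (a * b) * y = x * a * (∑ k, e k) * b * y := by
        simp only [he.complete, mul_one, mul_assoc]
    _ = ∑ k, x * a * e k * (e k * b * y) := by
        simp only [Finset.mul_sum, Finset.sum_mul]
        refine Finset.sum_congr rfl fun k _ => ?_
        simp only [mul_assoc, (he.idem k).mul_self_mul]

theorem Fin.exists_dist_eq_one_of_dist_eq_succ {d n : ℕ} (i j : Fin (d + 1))
    (h : Nat.dist i j = n + 1) :
    ∃ k : Fin (d + 1), Nat.dist i k = 1 ∧ Nat.dist k j = n ∧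
      ∀ l : Fin (d + 1), Nat.dist i l ≤ 1 → Nat.dist l j ≤ n → l = k := by
  unfold Nat.dist at *
  refine ⟨⟨if (i : ℕ) < j then i + 1 else i - 1, by split_ifs <;> omega⟩, ?_, ?_, fun l h1 h2 => ?_⟩
  · split_ifs <;> simp only <;> omega
  · split_ifs <;> simp only <;> omega
  · ext; split_ifs <;> simp only <;> omega

section Tridiagonal

variable {R : Type*} [Ring R] {d : ℕ} {E : Fin (d + 1) → R} {A : R}

theorem mul_pow_mul_eq_zero_of_lt_dist (he : CompleteOrthogonalIdempotents E)
    (htri : ∀ i j : Fin (d + 1), 1 < Nat.dist i j → E i * A * E j = 0) :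
    ∀ (r : ℕ) (i j : Fin (d + 1)), r < Nat.dist i j → E i * A ^ r * E j = 0
  | 0, i, j, h => by
    rw [pow_zero, mul_one]
    exact he.ortho fun hij => by simp [hij] at h
  | r + 1, i, j, h => by
    rw [pow_succ', he.mul_mul_mul_eq_sum]
    refine Finset.sum_eq_zero fun k _ => ?_
    by_cases hik : 1 < Nat.dist i k
    · rw [htri i k hik, zero_mul]
    · have hkj : r < Nat.dist k j := by unfold Nat.dist at *; omega
      rw [mul_pow_mul_eq_zero_of_lt_dist he htri r k j hkj, mul_zero]

theorem mul_pow_dist_mul_ne_zero (he : CompleteOrthogonalIdempotents E)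
    (htri : ∀ i j : Fin (d + 1), 1 < Nat.dist i j → E i * A * E j = 0)
    (hirr : ∀ i j : Fin (d + 1), Nat.dist i j = 1 → E i * A * E j ≠ 0)
    (hrankOne : ∀ k (x y : R), x * E k ≠ 0 → E k * y ≠ 0 → x * E k * y ≠ 0)
    (hne : ∀ i, E i ≠ 0) :
    ∀ (n : ℕ) (i j : Fin (d + 1)), Nat.dist i j = n → E i * A ^ n * E j ≠ 0
  | 0, i, j, h => by
    obtain rfl : i = j := Fin.ext (by unfold Nat.dist at h; omega)
    rw [pow_zero, mul_one, (he.idem i).eq]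
    exact hne i
  | n + 1, i, j, h => by
    obtain ⟨k, hik, hkj, hk⟩ := Fin.exists_dist_eq_one_of_dist_eq_succ i j h
    rw [pow_succ', he.mul_mul_mul_eq_sum, Finset.sum_eq_single k]
    · rw [mul_assoc (E k), ← mul_assoc (_ * _ * E k), (he.idem k).mul_mul_self]
      refine hrankOne k _ _ (hirr i k hik) ?_
      rw [← mul_assoc]
      exact mul_pow_dist_mul_ne_zero he htri hirr hrankOne hne n k j hkj
    · intro l _ hlk
      by_cases hil : 1 < Nat.dist i l
      · rw [htri i l hil, zero_mul]
      · have hlj : n < Nat.dist l j := by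
          by_contra hlj
          exact hlk (hk l (by omega) (by omega))
        rw [mul_pow_mul_eq_zero_of_lt_dist he htri n l j hlj, mul_zero]
    · simp

theorem linearIndependent_pow_mul_mul_pow {K : Type*} [Field K] [Algebra K R]
    (he : CompleteOrthogonalIdempotents E)
    (htri : ∀ i j : Fin (d + 1), 1 < Nat.dist i j → E i * A * E j = 0)
    (hirr : ∀ i j : Fin (d + 1), Nat.dist i j = 1 → E i * A * E j ≠ 0)
    (hrankOne : ∀ k (x y : R), x * E k ≠ 0 → E k * y ≠ 0 → x * E k * y ≠ 0)
    (hne : ∀ i, E i ≠ 0) :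
    LinearIndependent K fun rs : Fin (d + 1) × Fin (d + 1) =>
      A ^ (rs.1 : ℕ) * E 0 * A ^ (rs.2 : ℕ) := by
  have hsplit : ∀ (i j : Fin (d + 1)) (r s : ℕ),
      E i * (A ^ r * E 0 * A ^ s) * E j = E i * A ^ r * E 0 * (E 0 * A ^ s * E j) := by
    intro i j r s
    simp only [mul_assoc, (he.idem 0).mul_self_mul]
  refine linearIndependent_of_triangular _ (fun ij => LinearMap.mulLeftRight K (E ij.1, E ij.2))
    ?_ ?_
  · rintro ⟨i, j⟩ ⟨r, s⟩ hlt
    simp only [LinearMap.mulLeftRight_apply, hsplit]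
    rw [Prod.mk_le_mk, not_and_or, not_le, not_le] at hlt
    rcases hlt with hr | hs
    · rw [mul_pow_mul_eq_zero_of_lt_dist he htri r i 0 (by simpa [Nat.dist] using hr), zero_mul]
    · rw [mul_pow_mul_eq_zero_of_lt_dist he htri s 0 j (by simpa [Nat.dist] using hs), mul_zero]
  · rintro ⟨i, j⟩
    have hi0 := mul_pow_dist_mul_ne_zero he htri hirr hrankOne hne i i 0 (by simp [Nat.dist])
    have h0j := mul_pow_dist_mul_ne_zero he htri hirr hrankOne hne j 0 j (by simp [Nat.dist])
    rw [mul_assoc] at h0j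
    simpa only [LinearMap.mulLeftRight_apply, mul_assoc] using hrankOne 0 _ _ hi0 h0j

end Tridiagonal

/-- Let `{E*_i}_{i=0}^d` be a system of mutually orthogonal idempotents in `End(V)`, and
let `A ∈ End(V)` satisfy `E*_i A E*_j = 0` if `|i−j| > 1` and `E*_i A E*_j ≠ 0` if
`|i−j| = 1`. Then the `(d+1)^2` elements `A^r E*_0 A^s` (`0 ≤ r, s ≤ d`) form a basis
for `End(V)` as a `K`-vector space. -/
theorem stmt_6 {K : Type*} [Field K] {d : ℕ}
    {V : Type*} [AddCommGroup V] [Module K V] [FiniteDimensional K V]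
    (hdim : Module.finrank K V = d + 1)
    (Estar : Fin (d + 1) → Module.End K V)
    (hEstar : ∀ i j, Estar i * Estar j = if i = j then Estar i else 0)
    (hEstarRank : ∀ i, Module.finrank K (LinearMap.range (Estar i)) = 1)
    (A : Module.End K V)
    (htri : ∀ i j : Fin (d + 1), 1 < Nat.dist (i : ℕ) (j : ℕ) → Estar i * A * Estar j = 0)
    (hirr : ∀ i j : Fin (d + 1), Nat.dist (i : ℕ) (j : ℕ) = 1 → Estar i * A * Estar j ≠ 0) :
    LinearIndependent K
        (fun rs : Fin (d + 1) × Fin (d + 1) =>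
          A ^ (rs.1 : ℕ) * Estar 0 * A ^ (rs.2 : ℕ)) ∧
      Submodule.span K
          (Set.range fun rs : Fin (d + 1) × Fin (d + 1) =>
            A ^ (rs.1 : ℕ) * Estar 0 * A ^ (rs.2 : ℕ)) = ⊤ := by
  have hne : ∀ i, Estar i ≠ 0 := fun i h => by
    have := hEstarRank i
    rw [h, LinearMap.range_zero, finrank_bot] at this
    exact zero_ne_one this
  have hcomplete : CompleteOrthogonalIdempotents Estar :=
    .of_card_eq_finrank (OrthogonalIdempotents.iff_mul_eq.mpr hEstar) hne (by simp [hdim])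
  have hli := linearIndependent_pow_mul_mul_pow (K := K) hcomplete htri hirr
    (fun k _ _ => Module.End.mul_mul_ne_zero_of_finrank_range_eq_one (hEstarRank k)) hne
  exact ⟨hli, hli.span_eq_top_of_card_eq_finrank (by simp [Module.finrank_linearMap, hdim])⟩
end

section
/- Let {E*_i}_{i=0}^d be a system of mutually orthogonal idempotents in End(V), and let A ∈ End(V) satisfy E*_i A E*_j = 0 if |i−j| > 1 and E*_i A E*_j ≠ 0 if |i−j| = 1 (0 ≤ i, j ≤ d). Then A and E*_0 together generate End(V) as a K-algebra. -/
/-!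
Since the `E*_i` are orthogonal rank-one idempotents in a space of dimension `d + 1`, they sum
to `1`, so every `X` is the sum of its corners `E*_i X E*_j`, and each corner `E*_i End(V) E*_j`
is a line. Tridiagonality and irreducibility give `E*_i A^n E*_j = 0` for `n < |i - j|` and
`≠ 0` for `n = |i - j|`, so `E*_i A^|i-j| E*_j` spans its corner. It remains to see that every
`E*_i` lies in the algebra `T` generated by `A` and `E*_0`: if `E*_0, …, E*_i ∈ T`, then
`P = 1 - (E*_0 + ⋯ + E*_i) ∈ T`, and `P A E*_i A P = E*_{i+1} A E*_i A E*_{i+1}` is a nonzero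
element of the line `E*_{i+1} End(V) E*_{i+1} = K E*_{i+1}`.
-/

open Module LinearMap

theorem Fin.exists_dist_eq_one_and_dist_eq {m n : ℕ} {i j : Fin m} (h : Nat.dist i j = n + 1) :
    ∃ k : Fin m, Nat.dist i k = 1 ∧ Nat.dist k j = n := by
  unfold Nat.dist at *
  rcases Nat.lt_or_gt_of_ne (show (i : ℕ) ≠ j by omega) with hij | hij
  · exact ⟨⟨i + 1, by omega⟩, by dsimp only; omega, by dsimp only; omega⟩
  · exact ⟨⟨i - 1, by omega⟩, by dsimp only; omega, by dsimp only; omega⟩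

namespace Module.End

variable {K V : Type*} [Field K] [AddCommGroup V] [Module K V]

theorem mul_ne_zero_of_finrank_range_eq_one {E P Q : End K V}
    (hE : finrank K (range E) = 1) (hP : P * E = P) (hQ : E * Q = Q)
    (hP0 : P ≠ 0) (hQ0 : Q ≠ 0) : P * Q ≠ 0 := by
  intro hPQ
  have hQE : range Q = range E :=
    ((Submodule.isAtom_iff_finrank_eq_one.mpr hE).le_iff_eq (range_eq_bot.not.mpr hQ0)).mp
      (hQ ▸ range_comp_le_range Q E)
  exact hP0 (hP ▸ range_le_ker_iff.mp (hQE ▸ range_le_ker_iff.mpr hPQ))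

theorem exists_mul_mul_eq_smul_of_finrank_range_eq_one {E F M : End K V}
    (hE : finrank K (range E) = 1) (hF : finrank K (range F) = 1) (hM : E * M * F ≠ 0)
    (N : End K V) : ∃ c : K, E * N * F = c • (E * M * F) := by
  -- `range F` is the line `K ∙ w`, so `E * X * F` is determined by `E (X w)`, which lies in the
  -- line `range E`.
  obtain ⟨y, hy⟩ := DFunLike.ne_iff.mp hM
  set w := F y
  have hw : range F = K ∙ w := by
    refine eq_span_singleton_of_mem_of_finrank_eq_one hF (mem_range_self F y) ?_
    intro hw0
    exact hy (by simp [mul_apply, w, hw0])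
  have hMw : (⟨E (M w), mem_range_self E _⟩ : range E) ≠ 0 := by
    simpa [Subtype.ext_iff] using hy
  obtain ⟨c, hc⟩ := exists_smul_eq_of_finrank_eq_one hE hMw ⟨E (N w), mem_range_self E _⟩
  refine ⟨c, sub_eq_zero.mp ?_⟩
  have hker : range F ≤ ker (E * N - c • (E * M)) := by
    rw [hw, Submodule.span_singleton_le_iff_mem, mem_ker, LinearMap.sub_apply, sub_eq_zero]
    exact (congrArg Subtype.val hc).symm
  rw [← smul_mul_assoc, ← sub_mul]
  exact range_le_ker_iff.mp hker

end Module.End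

theorem OrthogonalIdempotents.sum_eq_one_of_finrank_le {K V ι : Type*} [Field K] [AddCommGroup V]
    [Module K V] [FiniteDimensional K V] [Fintype ι] {E : ι → End K V}
    (he : OrthogonalIdempotents E) (h : finrank K V ≤ ∑ i, finrank K (range (E i))) :
    ∑ i, E i = 1 := by
  classical
  let Φ : (Π i, range (E i)) →ₗ[K] V :=
    { toFun f := ∑ i, (f i : V)
      map_add' f g := by simp [Finset.sum_add_distrib]
      map_smul' c f := by simp [Finset.smul_sum] }
  have hΦ : ∀ f j, E j (Φ f) = f j := by
    intro f j
    refine (map_sum (E j) _ _).trans <|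
      (Finset.sum_eq_single j (fun i _ hij ↦ ?_) (by simp)).trans ?_
    · obtain ⟨y, hy⟩ := (f i).2
      rw [← hy, ← Module.End.mul_apply, he.mul_eq, if_neg hij.symm, LinearMap.zero_apply]
    · obtain ⟨y, hy⟩ := (f j).2
      rw [← hy, ← Module.End.mul_apply, (he.idem j).eq]
  have hinj : Function.Injective Φ := fun f g hfg ↦
    funext fun j ↦ Subtype.ext (by rw [← hΦ, ← hΦ, hfg])
  have hsurj : Function.Surjective Φ := by
    refine (injective_iff_surjective_of_finrank_eq_finrank (le_antisymm ?_ ?_)).mp hinj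
    · exact finrank_le_finrank_of_injective hinj
    · simpa [finrank_pi_fintype] using h
  ext v
  obtain ⟨f, rfl⟩ := hsurj v
  rw [LinearMap.sum_apply]
  simp only [hΦ]
  rfl

namespace CompleteOrthogonalIdempotents

variable {R : Type*} [Semiring R]

section Fintype

variable {ι : Type*} [Fintype ι] {e : ι → R}

theorem mul_eq_sum_mul_mul (he : CompleteOrthogonalIdempotents e) (a b : R) :
    a * b = ∑ i, a * e i * (e i * b) := by
  calc a * b = a * (∑ i, e i) * b := by rw [he.complete, mul_one]
    _ = ∑ i, a * (e i * e i) * b := by simp only [Finset.mul_sum, Finset.sum_mul, (he.idem _).eq]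
    _ = ∑ i, a * e i * (e i * b) := by simp only [mul_assoc]

theorem eq_sum_sum_mul_mul (he : CompleteOrthogonalIdempotents e) (a : R) :
    a = ∑ i, ∑ j, e i * a * e j := by
  calc a = (∑ i, e i) * a * ∑ j, e j := by rw [he.complete, one_mul, mul_one]
    _ = ∑ i, ∑ j, e i * a * e j := by
      rw [Finset.sum_mul, Finset.sum_mul]
      simp only [Finset.mul_sum]

theorem mul_pow_succ_mul (he : CompleteOrthogonalIdempotents e) (a : R) (i j : ι) (n : ℕ) :
    e i * a ^ (n + 1) * e j = ∑ k, e i * a * e k * (e k * a ^ n * e j) := by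
  rw [pow_succ', ← mul_assoc, mul_assoc _ (a ^ n), he.mul_eq_sum_mul_mul]
  simp only [mul_assoc]

end Fintype

theorem mul_pow_mul_eq_zero_of_lt_dist {d : ℕ} {e : Fin (d + 1) → R} {a : R}
    (he : CompleteOrthogonalIdempotents e)
    (htri : ∀ i j : Fin (d + 1), 1 < Nat.dist i j → e i * a * e j = 0)
    {n : ℕ} {i j : Fin (d + 1)} (h : n < Nat.dist i j) : e i * a ^ n * e j = 0 := by
  induction n generalizing i j with
  | zero =>
    rw [pow_zero, mul_one]
    exact he.ortho fun hij ↦ by simp [hij] at h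
  | succ n ih =>
    rw [he.mul_pow_succ_mul]
    refine Finset.sum_eq_zero fun k _ ↦ ?_
    by_cases hik : 1 < Nat.dist i k
    · rw [htri i k hik, zero_mul]
    · rw [ih (by have := Nat.dist.triangle_inequality i k j; omega), mul_zero]

section End

variable {K V : Type*} [Field K] [AddCommGroup V] [Module K V] {d : ℕ}
  {E : Fin (d + 1) → End K V} {A : End K V}

theorem mul_pow_mul_ne_zero_of_dist_eq (he : CompleteOrthogonalIdempotents E)
    (hrank : ∀ i, finrank K (range (E i)) = 1)
    (htri : ∀ i j : Fin (d + 1), 1 < Nat.dist i j → E i * A * E j = 0)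
    (hirr : ∀ i j : Fin (d + 1), Nat.dist i j = 1 → E i * A * E j ≠ 0)
    {n : ℕ} {i j : Fin (d + 1)} (h : Nat.dist i j = n) : E i * A ^ n * E j ≠ 0 := by
  induction n generalizing i j with
  | zero =>
    obtain rfl : i = j := Fin.ext (Nat.eq_of_dist_eq_zero h)
    rw [pow_zero, mul_one, (he.idem i).eq]
    intro h0
    have := hrank i
    rw [h0, range_zero, finrank_bot] at this
    exact zero_ne_one this
  | succ n ih =>
    obtain ⟨k, hik, hkj⟩ := Fin.exists_dist_eq_one_and_dist_eq h
    rw [he.mul_pow_succ_mul, Finset.sum_eq_single k]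
    · refine Module.End.mul_ne_zero_of_finrank_range_eq_one (hrank k) ?_ ?_ (hirr i k hik) (ih hkj)
      · exact (he.idem k).mul_mul_self _
      · simp only [← mul_assoc, (he.idem k).eq]
    · intro l _ hlk
      by_cases hil : 1 < Nat.dist i l
      · rw [htri i l hil, zero_mul]
      · refine mul_eq_zero_of_right _ (mul_pow_mul_eq_zero_of_lt_dist he htri ?_)
        have := Fin.val_ne_of_ne hlk
        unfold Nat.dist at *
        omega
    · simp

theorem succ_mem_of_forall_le_castSucc_mem (he : CompleteOrthogonalIdempotents E)
    (hrank : ∀ i, finrank K (range (E i)) = 1)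
    (htri : ∀ i j : Fin (d + 1), 1 < Nat.dist i j → E i * A * E j = 0)
    (hirr : ∀ i j : Fin (d + 1), Nat.dist i j = 1 → E i * A * E j ≠ 0)
    {S : Subalgebra K (End K V)} (hA : A ∈ S) {i : Fin d}
    (hle : ∀ k ≤ i.castSucc, E k ∈ S) : E i.succ ∈ S := by
  have hsucc := i.val_succ
  have hcast := i.val_castSucc
  have hP : ∑ k ∈ (Finset.Iic i.castSucc)ᶜ, E k ∈ S := by
    rw [← add_sub_cancel_right (∑ k ∈ _, E k) (∑ k ∈ Finset.Iic i.castSucc, E k),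
      Finset.sum_compl_add_sum, he.complete]
    exact S.sub_mem S.one_mem (S.sum_mem fun k hk ↦ hle k (Finset.mem_Iic.mp hk))
  have hmem : i.succ ∈ (Finset.Iic i.castSucc)ᶜ := by simp
  have hfar : ∀ k ∈ (Finset.Iic i.castSucc)ᶜ, k ≠ i.succ →
      1 < Nat.dist k i.castSucc ∧ 1 < Nat.dist i.castSucc k := by
    intro k hk hne
    simp only [Finset.mem_compl, Finset.mem_Iic, not_le] at hk
    have := Fin.val_ne_of_ne hne
    unfold Nat.dist
    omega
  have hleft : (∑ k ∈ (Finset.Iic i.castSucc)ᶜ, E k) * A * E i.castSucc =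
      E i.succ * A * E i.castSucc := by
    rw [Finset.sum_mul, Finset.sum_mul, Finset.sum_eq_single_of_mem _ hmem]
    exact fun k hk hne ↦ htri _ _ (hfar k hk hne).1
  have hright : E i.castSucc * A * ∑ k ∈ (Finset.Iic i.castSucc)ᶜ, E k =
      E i.castSucc * A * E i.succ := by
    rw [Finset.mul_sum, Finset.sum_eq_single_of_mem _ hmem]
    exact fun k hk hne ↦ htri _ _ (hfar k hk hne).2
  have hXS : E i.succ * A * E i.castSucc * (E i.castSucc * A * E i.succ) ∈ S := by
    rw [← hleft, ← hright]
    exact mul_mem (mul_mem (mul_mem hP hA) (hle _ le_rfl)) (mul_mem (mul_mem (hle _ le_rfl) hA) hP)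
  set X := E i.succ * A * E i.castSucc * (E i.castSucc * A * E i.succ)
  have hX0 : X ≠ 0 :=
    Module.End.mul_ne_zero_of_finrank_range_eq_one (hrank i.castSucc)
      ((he.idem _).mul_mul_self _) (by simp only [← mul_assoc, (he.idem _).eq])
      (hirr _ _ (by unfold Nat.dist; omega)) (hirr _ _ (by unfold Nat.dist; omega))
  have hXcorner : E i.succ * X * E i.succ = X := by
    simp only [X, ← mul_assoc, (he.idem i.succ).eq, (he.idem i.succ).mul_mul_self]
  obtain ⟨c, hc⟩ := Module.End.exists_mul_mul_eq_smul_of_finrank_range_eq_one (hrank i.succ)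
    (hrank i.succ) (hXcorner.symm ▸ hX0) 1
  rw [mul_one, (he.idem _).eq, hXcorner] at hc
  exact hc ▸ S.smul_mem hXS c

theorem mem_adjoin_of_tridiagonal (he : CompleteOrthogonalIdempotents E)
    (hrank : ∀ i, finrank K (range (E i)) = 1)
    (htri : ∀ i j : Fin (d + 1), 1 < Nat.dist i j → E i * A * E j = 0)
    (hirr : ∀ i j : Fin (d + 1), Nat.dist i j = 1 → E i * A * E j ≠ 0) (i : Fin (d + 1)) :
    E i ∈ Algebra.adjoin K {A, E 0} := by
  suffices ∀ k ≤ i, E k ∈ Algebra.adjoin K {A, E 0} from this i le_rfl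
  induction i using Fin.induction with
  | zero =>
    intro k hk
    rw [Fin.le_zero_iff.mp hk]
    exact Algebra.subset_adjoin (by simp)
  | succ i ih =>
    intro k hk
    obtain hk | rfl : k ≤ i.castSucc ∨ k = i.succ := by
      have := i.val_succ
      have := i.val_castSucc
      omega
    · exact ih k hk
    · exact succ_mem_of_forall_le_castSucc_mem he hrank htri hirr
        (Algebra.subset_adjoin (by simp)) ih

theorem adjoin_eq_top_of_tridiagonal (he : CompleteOrthogonalIdempotents E)
    (hrank : ∀ i, finrank K (range (E i)) = 1)
    (htri : ∀ i j : Fin (d + 1), 1 < Nat.dist i j → E i * A * E j = 0)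
    (hirr : ∀ i j : Fin (d + 1), Nat.dist i j = 1 → E i * A * E j ≠ 0) :
    Algebra.adjoin K {A, E 0} = ⊤ := by
  refine eq_top_iff.mpr fun X _ ↦ ?_
  rw [he.eq_sum_sum_mul_mul X]
  refine Subalgebra.sum_mem _ fun i _ ↦ Subalgebra.sum_mem _ fun j _ ↦ ?_
  obtain ⟨c, hc⟩ := Module.End.exists_mul_mul_eq_smul_of_finrank_range_eq_one
    (hrank i) (hrank j) (mul_pow_mul_ne_zero_of_dist_eq he hrank htri hirr rfl) X
  have hE := mem_adjoin_of_tridiagonal he hrank htri hirr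
  rw [hc]
  exact Subalgebra.smul_mem _
    (mul_mem (mul_mem (hE i) (pow_mem (Algebra.subset_adjoin (by simp)) _)) (hE j)) c

end End

end CompleteOrthogonalIdempotents

/-- Let `{E*_i}_{i=0}^d` be a system of mutually orthogonal idempotents in `End(V)`, and
let `A ∈ End(V)` satisfy `E*_i A E*_j = 0` if `|i−j| > 1` and `E*_i A E*_j ≠ 0` if
`|i−j| = 1`. Then `A` and `E*_0` together generate `End(V)` as a `K`-algebra. -/
theorem stmt_7 {K : Type*} [Field K] {d : ℕ}
    {V : Type*} [AddCommGroup V] [Module K V] [FiniteDimensional K V]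
    (hdim : Module.finrank K V = d + 1)
    (Estar : Fin (d + 1) → Module.End K V)
    (hEstar : ∀ i j, Estar i * Estar j = if i = j then Estar i else 0)
    (hEstarRank : ∀ i, Module.finrank K (LinearMap.range (Estar i)) = 1)
    (A : Module.End K V)
    (htri : ∀ i j : Fin (d + 1), 1 < Nat.dist (i : ℕ) (j : ℕ) → Estar i * A * Estar j = 0)
    (hirr : ∀ i j : Fin (d + 1), Nat.dist (i : ℕ) (j : ℕ) = 1 → Estar i * A * Estar j ≠ 0) :
    Algebra.adjoin K {A, Estar 0} = ⊤ := by
  have hortho : OrthogonalIdempotents Estar := OrthogonalIdempotents.iff_mul_eq.mpr hEstar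
  have he : CompleteOrthogonalIdempotents Estar :=
    ⟨hortho, hortho.sum_eq_one_of_finrank_le (by simp [hEstarRank, hdim])⟩
  exact he.adjoin_eq_top_of_tridiagonal hEstarRank htri hirr
end

section
/- Let {E*_i}_{i=0}^d be a system of mutually orthogonal idempotents in End(V), and let A ∈ End(V) satisfy E*_i A E*_j = 0 if |i−j| > 1 and E*_i A E*_j ≠ 0 if |i−j| = 1 (0 ≤ i, j ≤ d). Then there exists an antiautomorphism † of End(V) such that A^† = A and (E*_i)^† = E*_i for 0 ≤ i ≤ d. -/
/-!
Choose a nonzero vector in the range of each `E*_i`. These vectors form a basis in which `E*_i`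
is the matrix unit `e_ii` and `A` is a tridiagonal matrix `a` with nonzero sub- and
superdiagonal. Such a matrix is symmetrised by a diagonal matrix `D = diag c`: take `c_0 = 1`
and `c_{k+1} = c_k a_{k+1,k} / a_{k,k+1}`, so that `a D` is symmetric. Then `M ↦ D Mᵀ D⁻¹` is an
antiautomorphism of the matrix algebra fixing every diagonal matrix, and also `a`, because
`D aᵀ = (a D)ᵀ = a D`.
-/

open Matrix Module

theorem Fin.exists_castSucc_succ_of_dist_eq_one {d : ℕ} {i j : Fin (d + 1)}
    (hij : (i : ℕ) < j) (h : Nat.dist i j = 1) : ∃ k : Fin d, i = k.castSucc ∧ j = k.succ := by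
  have hj : (j : ℕ) = i + 1 := by rw [Nat.dist_eq_sub_of_le hij.le] at h; omega
  exact ⟨⟨i, by omega⟩, Fin.ext rfl, Fin.ext hj⟩

section

variable {K : Type*} [Field K]

namespace Matrix

section DiagonalConjTranspose

variable {n : Type*} [Fintype n] [DecidableEq n]

def diagonalConjTranspose (c : n → K) : Matrix n n K →ₗ[K] Matrix n n K where
  toFun M := diagonal c * Mᵀ * diagonal c⁻¹
  map_add' M N := by simp only [transpose_add, Matrix.mul_add, Matrix.add_mul]
  map_smul' r M := by
    simp only [transpose_smul, Matrix.mul_smul, Matrix.smul_mul, RingHom.id_apply]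

theorem diagonalConjTranspose_apply (c : n → K) (M : Matrix n n K) :
    diagonalConjTranspose c M = diagonal c * Mᵀ * diagonal c⁻¹ := rfl

variable {c : n → K}

theorem diagonal_inv_mul_diagonal (hc : ∀ i, c i ≠ 0) : diagonal c⁻¹ * diagonal c = 1 := by
  rw [diagonal_mul_diagonal, ← diagonal_one]
  exact congrArg diagonal (funext fun i => inv_mul_cancel₀ (hc i))

theorem diagonal_mul_diagonal_inv (hc : ∀ i, c i ≠ 0) : diagonal c * diagonal c⁻¹ = 1 := by
  rw [diagonal_mul_diagonal, ← diagonal_one]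
  exact congrArg diagonal (funext fun i => mul_inv_cancel₀ (hc i))

theorem diagonalConjTranspose_mul (hc : ∀ i, c i ≠ 0) (M N : Matrix n n K) :
    diagonalConjTranspose c (M * N) = diagonalConjTranspose c N * diagonalConjTranspose c M := by
  simp only [diagonalConjTranspose_apply, transpose_mul, Matrix.mul_assoc]
  rw [← Matrix.mul_assoc (diagonal c⁻¹), diagonal_inv_mul_diagonal hc, Matrix.one_mul]

theorem diagonalConjTranspose_involutive (hc : ∀ i, c i ≠ 0) :
    Function.Involutive (diagonalConjTranspose c) := fun M => by
  simp only [diagonalConjTranspose_apply, transpose_mul, transpose_transpose, diagonal_transpose,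
    Matrix.mul_assoc, diagonal_mul_diagonal_inv hc, Matrix.mul_one]
  rw [← Matrix.mul_assoc, diagonal_mul_diagonal_inv hc, Matrix.one_mul]

theorem diagonalConjTranspose_diagonal (hc : ∀ i, c i ≠ 0) (w : n → K) :
    diagonalConjTranspose c (diagonal w) = diagonal w := by
  rw [diagonalConjTranspose_apply, diagonal_transpose, diagonal_mul_diagonal,
    diagonal_mul_diagonal]
  exact congrArg diagonal (funext fun i => by
    rw [Pi.inv_apply, mul_comm (c i), mul_inv_cancel_right₀ (hc i)])

theorem diagonalConjTranspose_eq_self (hc : ∀ i, c i ≠ 0) {M : Matrix n n K}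
    (hM : (M * diagonal c).IsSymm) : diagonalConjTranspose c M = M := by
  rw [diagonalConjTranspose_apply, ← diagonal_transpose c, ← transpose_mul, hM.eq,
    Matrix.mul_assoc, diagonal_mul_diagonal_inv hc, Matrix.mul_one]

end DiagonalConjTranspose

theorem exists_isSymm_mul_diagonal_of_tridiagonal {d : ℕ}
    (a : Matrix (Fin (d + 1)) (Fin (d + 1)) K)
    (h_zero : ∀ i j : Fin (d + 1), 1 < Nat.dist i j → a i j = 0)
    (h_ne : ∀ i j : Fin (d + 1), Nat.dist i j = 1 → a i j ≠ 0) :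
    ∃ c : Fin (d + 1) → K, (∀ i, c i ≠ 0) ∧ (a * diagonal c).IsSymm := by
  have h_up (k : Fin d) : a k.castSucc k.succ ≠ 0 := h_ne _ _ (by simp [Nat.dist])
  have h_down (k : Fin d) : a k.succ k.castSucc ≠ 0 := h_ne _ _ (by simp [Nat.dist])
  let c : Fin (d + 1) → K :=
    Fin.induction 1 fun k ck => ck * a k.succ k.castSucc / a k.castSucc k.succ
  have hc_succ (k : Fin d) :
      c k.succ = c k.castSucc * a k.succ k.castSucc / a k.castSucc k.succ :=
    Fin.induction_succ ..
  have hc : ∀ i, c i ≠ 0 := by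
    refine Fin.induction (by simp [c]) fun k hk => ?_
    rw [hc_succ]
    exact div_ne_zero (mul_ne_zero hk (h_down k)) (h_up k)
  refine ⟨c, hc, IsSymm.ext fun i j => ?_⟩
  simp only [mul_diagonal]
  wlog hij : (i : ℕ) ≤ j generalizing i j
  · exact (this j i (by omega)).symm
  rcases Nat.lt_or_ge 1 (Nat.dist i j) with hfar | hnear
  · rw [h_zero i j hfar, h_zero j i (Nat.dist_comm i j ▸ hfar), zero_mul, zero_mul]
  rcases hij.lt_or_eq with hlt | heq
  · obtain ⟨k, rfl, rfl⟩ := Fin.exists_castSucc_succ_of_dist_eq_one hlt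
      (by have := Nat.dist_pos_of_ne hlt.ne; omega)
    rw [hc_succ]
    field_simp [h_up k]
  · rw [Fin.ext heq]

end Matrix

theorem exists_basis_toMatrixAlgEquiv_eq_single_of_orthogonal_idempotents
    {ι V : Type*} [Fintype ι] [DecidableEq ι] [Nonempty ι] [AddCommGroup V] [Module K V]
    {E : ι → Module.End K V} (hdim : finrank K V = Fintype.card ι)
    (hE : ∀ i j, E i * E j = if i = j then E i else 0)
    (hrank : ∀ i, finrank K (LinearMap.range (E i)) = 1) :
    ∃ b : Basis ι K V, ∀ i, LinearMap.toMatrixAlgEquiv b (E i) = single i i 1 := by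
  have hv (i : ι) : ∃ v ∈ LinearMap.range (E i), v ≠ 0 :=
    Submodule.exists_mem_ne_zero_of_ne_bot fun h => by
      have := hrank i
      rw [h, finrank_bot] at this
      exact zero_ne_one this
  choose v hv_mem hv_ne using hv
  have hEv (i j : ι) : E i (v j) = if i = j then v j else 0 := by
    obtain ⟨w, hw⟩ := hv_mem j
    rw [← hw, ← Module.End.mul_apply, hE]
    split_ifs with h <;> simp [h]
  have hli : LinearIndependent K v := by
    refine Fintype.linearIndependent_iff.mpr fun g hg i => ?_
    have := congrArg (E i) hg
    simp only [map_sum, map_smul, hEv, smul_ite, smul_zero, Finset.sum_ite_eq,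
      Finset.mem_univ, if_true, map_zero] at this
    exact (smul_eq_zero.mp this).resolve_right (hv_ne i)
  let b := basisOfLinearIndependentOfCardEqFinrank hli hdim.symm
  have hb (j : ι) : b j = v j := by simp [b]
  refine ⟨b, fun i => Matrix.ext fun k l => ?_⟩
  rw [LinearMap.toMatrixAlgEquiv_apply, hb, hEv]
  split_ifs with h
  · rw [← hb, b.repr_self]
    simp [Finsupp.single_apply, single_apply, h, eq_comm]
  · simp [h]

end

theorem stmt_9_general {K : Type*} [Field K] {d : ℕ}
    {V : Type*} [AddCommGroup V] [Module K V]
    (hdim : Module.finrank K V = d + 1)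
    (Estar : Fin (d + 1) → Module.End K V)
    (hEstar : ∀ i j, Estar i * Estar j = if i = j then Estar i else 0)
    (hEstarRank : ∀ i, Module.finrank K (LinearMap.range (Estar i)) = 1)
    (A : Module.End K V)
    (htri : ∀ i j : Fin (d + 1), 1 < Nat.dist (i : ℕ) (j : ℕ) → Estar i * A * Estar j = 0)
    (hirr : ∀ i j : Fin (d + 1), Nat.dist (i : ℕ) (j : ℕ) = 1 → Estar i * A * Estar j ≠ 0) :
    ∃ dag : Module.End K V ≃ₗ[K] Module.End K V,
      (∀ X Y : Module.End K V, dag (X * Y) = dag Y * dag X) ∧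
      dag A = A ∧ ∀ i, dag (Estar i) = Estar i := by
  obtain ⟨b, hφE⟩ := exists_basis_toMatrixAlgEquiv_eq_single_of_orthogonal_idempotents
    (hdim.trans (Fintype.card_fin _).symm) hEstar hEstarRank
  set φ := LinearMap.toMatrixAlgEquiv b
  have hφA (i j) : Estar i * A * Estar j = 0 ↔ φ A i j = 0 := by
    rw [← φ.injective.eq_iff, map_mul, map_mul, hφE, hφE, single_mul_mul_single, one_mul,
      mul_one, map_zero]
    exact ⟨fun h => by simpa using congrFun₂ h i j, fun h => by rw [h, single_zero]⟩
  obtain ⟨c, hc, hsymm⟩ := exists_isSymm_mul_diagonal_of_tridiagonal (φ A)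
    (fun i j h => (hφA i j).mp (htri i j h)) (fun i j h => mt (hφA i j).mpr (hirr i j h))
  let τ := LinearEquiv.ofInvolutive _ (diagonalConjTranspose_involutive hc)
  refine ⟨φ.toLinearEquiv ≪≫ₗ τ ≪≫ₗ φ.symm.toLinearEquiv, fun X Y => ?_, ?_, fun i => ?_⟩
  · simp [τ, diagonalConjTranspose_mul hc]
  · simp [τ, diagonalConjTranspose_eq_self hc hsymm]
  · change φ.symm (diagonalConjTranspose c (φ (Estar i))) = Estar i
    rw [hφE, ← diagonal_single, diagonalConjTranspose_diagonal hc, diagonal_single, ← hφE,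
      φ.symm_apply_apply]

/-- Let `{E*_i}_{i=0}^d` be a system of mutually orthogonal idempotents in `End(V)`, and
let `A ∈ End(V)` satisfy `E*_i A E*_j = 0` if `|i−j| > 1` and `E*_i A E*_j ≠ 0` if
`|i−j| = 1`. Then there exists an antiautomorphism `†` of `End(V)` such that `A^† = A`
and `(E*_i)^† = E*_i` for `0 ≤ i ≤ d`. -/
theorem stmt_9 {K : Type*} [Field K] {d : ℕ}
    {V : Type*} [AddCommGroup V] [Module K V] [FiniteDimensional K V]
    (hdim : Module.finrank K V = d + 1)
    (Estar : Fin (d + 1) → Module.End K V)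
    (hEstar : ∀ i j, Estar i * Estar j = if i = j then Estar i else 0)
    (hEstarRank : ∀ i, Module.finrank K (LinearMap.range (Estar i)) = 1)
    (A : Module.End K V)
    (htri : ∀ i j : Fin (d + 1), 1 < Nat.dist (i : ℕ) (j : ℕ) → Estar i * A * Estar j = 0)
    (hirr : ∀ i j : Fin (d + 1), Nat.dist (i : ℕ) (j : ℕ) = 1 → Estar i * A * Estar j ≠ 0) :
    ∃ dag : Module.End K V ≃ₗ[K] Module.End K V,
      (∀ X Y : Module.End K V, dag (X * Y) = dag Y * dag X) ∧
      dag A = A ∧ ∀ i, dag (Estar i) = Estar i :=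
  stmt_9_general hdim Estar hEstar hEstarRank A htri hirr
end

section
/- Assume d ≥ 1. Let {E*_i}_{i=0}^d be a system of mutually orthogonal idempotents in End(V), and let A ∈ End(V) satisfy E*_i A E*_j = 0 if |i−j| > 1 and E*_i A E*_j ≠ 0 if |i−j| = 1 (0 ≤ i, j ≤ d). Assume A is multiplicity-free with primitive idempotents {E_i}_{i=0}^d, let {θ*_i}_{i=0}^d be scalars in K, and set A* = Σ_{i=0}^d θ*_i E*_i. Then for 0 ≤ i, j ≤ d, E_i A* E_j = 0 if and only if E_j A* E_i = 0. -/
/-!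
In a basis adapted to the `E*_i`, the matrix of `A` is irreducible tridiagonal and that of `A*` is
diagonal. An irreducible tridiagonal matrix `M` is symmetrized by an invertible diagonal matrix `D`,
i.e. `D M = Mᵀ D`, so `X ↦ D⁻¹ Xᵀ D` is an anti-automorphism fixing `M`, hence every polynomial in
`M`, and every diagonal matrix. By Lagrange interpolation each `E_i` is a polynomial in `A`, so this
anti-automorphism sends `E_i A* E_j` to `E_j A* E_i`.
-/

open Polynomial Matrix

theorem SemiconjBy.aeval {R A : Type*} [CommSemiring R] [Semiring A] [Algebra R A] {a x y : A}
    (h : SemiconjBy a x y) (p : R[X]) : SemiconjBy a (aeval x p) (aeval y p) := by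
  induction p using Polynomial.induction_on' with
  | add p q hp hq => simpa only [map_add] using hp.add_right hq
  | monomial n c =>
    simpa only [aeval_monomial] using
      SemiconjBy.mul_right (Algebra.commute_algebraMap_left c a).symm (h.pow_right n)

theorem eq_aeval_lagrange_basis {K R ι : Type*} [Field K] [Ring R] [Algebra K R] [Fintype ι]
    [DecidableEq ι] {E : ι → R} (hE : ∀ i j, E i * E j = if i = j then E i else 0)
    (hsum : ∑ i, E i = 1) {θ : ι → K} (hθ : Function.Injective θ) (i : ι) :
    E i = aeval (∑ j, θ j • E j) (Lagrange.basis Finset.univ θ i) := by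
  set A := ∑ j, θ j • E j
  have hEA : ∀ j, SemiconjBy (E j) A (algebraMap K R (θ j)) := by
    intro j
    simp only [SemiconjBy, A, Finset.mul_sum, mul_smul_comm, hE, smul_ite, smul_zero,
      Finset.sum_ite_eq, Finset.mem_univ, if_true]
    exact Algebra.smul_def _ _
  have hEp : ∀ j (p : K[X]), E j * aeval A p = algebraMap K R (p.eval (θ j)) * E j := by
    intro j p
    rw [(hEA j).aeval p, aeval_algebraMap_apply_eq_algebraMap_eval]
  calc E i = ∑ j, algebraMap K R ((Lagrange.basis Finset.univ θ i).eval (θ j)) * E j := by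
        rw [Finset.sum_eq_single i, Lagrange.eval_basis_self hθ.injOn (Finset.mem_univ i),
          map_one, one_mul]
        · intro j _ hji
          rw [Lagrange.eval_basis_of_ne hji.symm (Finset.mem_univ j), map_zero, zero_mul]
        · simp
    _ = aeval A (Lagrange.basis Finset.univ θ i) := by
        simp only [← hEp, ← Finset.sum_mul, hsum, one_mul]

theorem Matrix.aeval_transpose {R α n : Type*} [CommSemiring R] [CommSemiring α] [Algebra R α]
    [Fintype n] [DecidableEq n] (M : Matrix n n α) (p : R[X]) :
    aeval Mᵀ p = (aeval M p)ᵀ := by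
  simpa [aeval_op_apply] using
    congrArg MulOpposite.unop (aeval_algHom_apply (transposeAlgEquiv n R α).toAlgHom M p)

theorem Matrix.mul_mul_eq_zero_of_semiconjBy_transpose {n R : Type*} [Fintype n] [DecidableEq n]
    [CommRing R] {D X Y Z : Matrix n n R} (hD : IsUnit D) (hX : SemiconjBy D X Xᵀ)
    (hY : SemiconjBy D Y Yᵀ) (hZ : SemiconjBy D Z Zᵀ) (h : X * Y * Z = 0) : Z * Y * X = 0 := by
  have hXYZ : D * (X * Y * Z) = (Z * Y * X)ᵀ * D := by
    rw [(hX.mul_right hY).mul_right hZ, transpose_mul, transpose_mul, Matrix.mul_assoc Xᵀ]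
  rwa [h, Matrix.mul_zero, eq_comm, hD.mul_left_eq_zero, transpose_eq_zero] at hXYZ

theorem Matrix.aeval_mul_diagonal_mul_aeval_eq_zero_comm {K n : Type*} [Field K] [Fintype n]
    [DecidableEq n] {M : Matrix n n K} {k : n → K} (hk : ∀ i, k i ≠ 0)
    (hkM : SemiconjBy (diagonal k) M Mᵀ) (θ : n → K) (p q : K[X]) :
    aeval M p * diagonal θ * aeval M q = 0 ↔ aeval M q * diagonal θ * aeval M p = 0 := by
  have hD : IsUnit (diagonal k) := isUnit_diagonal.mpr (Pi.isUnit_iff.mpr fun i => (hk i).isUnit)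
  have hM : ∀ r : K[X], SemiconjBy (diagonal k) (aeval M r) (aeval M r)ᵀ :=
    fun r => aeval_transpose M r ▸ hkM.aeval r
  have hθ : SemiconjBy (diagonal k) (diagonal θ) (diagonal θ)ᵀ := by
    rw [diagonal_transpose]
    exact commute_diagonal k θ
  exact ⟨mul_mul_eq_zero_of_semiconjBy_transpose hD (hM p) hθ (hM q),
    mul_mul_eq_zero_of_semiconjBy_transpose hD (hM q) hθ (hM p)⟩

theorem Matrix.exists_semiconjBy_diagonal_transpose {K : Type*} [Field K] {n : ℕ}
    (M : Matrix (Fin (n + 1)) (Fin (n + 1)) K)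
    (hM : ∀ i j : Fin (n + 1), 1 < Nat.dist i j → M i j = 0)
    (hsup : ∀ t : Fin n, M t.castSucc t.succ ≠ 0) (hsub : ∀ t : Fin n, M t.succ t.castSucc ≠ 0) :
    ∃ k : Fin (n + 1) → K, (∀ i, k i ≠ 0) ∧ SemiconjBy (diagonal k) M Mᵀ := by
  -- `k i * M i j = k j * M j i` on the two off-diagonals dictates the ratios `k (t+1) / k t`.
  obtain ⟨k, hk0, hk⟩ : ∃ k : Fin (n + 1) → K, k 0 = 1 ∧
      ∀ t : Fin n, k t.succ = k t.castSucc * (M t.castSucc t.succ / M t.succ t.castSucc) :=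
    ⟨_, Fin.partialProd_zero _, Fin.partialProd_succ _⟩
  have hk_ne : ∀ i, k i ≠ 0 := by
    refine Fin.induction (by simp [hk0]) fun t ht => ?_
    rw [hk]
    exact mul_ne_zero ht (div_ne_zero (hsup t) (hsub t))
  refine ⟨k, hk_ne, ?_⟩
  ext i j
  rw [diagonal_mul, mul_diagonal, transpose_apply]
  wlog hij : (i : ℕ) ≤ j generalizing i j
  · linear_combination -(this j i (by omega))
  obtain rfl | hsucc | hfar : i = j ∨ (j : ℕ) = i + 1 ∨ 1 < Nat.dist i j := by
    rw [Fin.ext_iff]; unfold Nat.dist; omega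
  · ring
  · obtain ⟨t, rfl, rfl⟩ : ∃ t : Fin n, i = t.castSucc ∧ j = t.succ :=
      ⟨⟨i, by omega⟩, rfl, Fin.ext hsucc⟩
    rw [hk]
    field_simp [hsub t]
  · rw [hM i j hfar, hM j i (Nat.dist_comm i j ▸ hfar), mul_zero, zero_mul]

theorem exists_basis_toMatrixAlgEquiv_eq_single {K V ι : Type*} [Field K] [AddCommGroup V]
    [Module K V] [FiniteDimensional K V] [Fintype ι] [DecidableEq ι]
    (hdim : Module.finrank K V = Fintype.card ι) {E : ι → Module.End K V}
    (hE : ∀ i j, E i * E j = if i = j then E i else 0) (hE0 : ∀ i, E i ≠ 0) :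
    ∃ b : Module.Basis ι K V, ∀ i, LinearMap.toMatrixAlgEquiv b (E i) = single i i 1 := by
  choose x hx using fun i => DFunLike.ne_iff.mp (hE0 i)
  have hEv : ∀ i j, E i (E j (x j)) = if i = j then E j (x j) else 0 := by
    intro i j
    rw [← Module.End.mul_apply, hE]
    split_ifs with h <;> simp [h]
  have hli : LinearIndependent K fun j => E j (x j) := by
    rw [Fintype.linearIndependent_iff]
    intro g hg i
    have := congrArg (E i) hg
    simp only [map_sum, map_smul, hEv, smul_ite, smul_zero, Finset.sum_ite_eq,
      Finset.mem_univ, if_true, map_zero] at this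
    exact (smul_eq_zero.mp this).resolve_right (hx i)
  set b := basisOfLinearIndependentOfCardEqFinrank' _ hli hdim.symm
  have hb : ∀ i j, E i (b j) = if i = j then b j else 0 := by
    simpa [b] using hEv
  refine ⟨b, fun i => ?_⟩
  ext j l
  rw [LinearMap.toMatrixAlgEquiv_apply, hb, single_apply]
  by_cases hil : i = l
  · subst hil
    simp [b.repr_self, Finsupp.single_apply]
  · simp [hil]

theorem mul_mul_eq_zero_iff_toMatrixAlgEquiv_apply_eq_zero {K V ι : Type*} [Field K]
    [AddCommGroup V] [Module K V] [Fintype ι] [DecidableEq ι] {b : Module.Basis ι K V}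
    {E : ι → Module.End K V} (hb : ∀ i, LinearMap.toMatrixAlgEquiv b (E i) = single i i 1)
    (X : Module.End K V) (i j : ι) :
    E i * X * E j = 0 ↔ LinearMap.toMatrixAlgEquiv b X i j = 0 := by
  rw [← map_eq_zero_iff _ (LinearMap.toMatrixAlgEquiv b).injective, map_mul, map_mul, hb, hb,
    single_mul_mul_single, one_mul, mul_one]
  simp [← Matrix.ext_iff, single_apply]

theorem stmt_12_general {K : Type*} [Field K] {d : ℕ}
    {V : Type*} [AddCommGroup V] [Module K V] [FiniteDimensional K V]
    (hdim : Module.finrank K V = d + 1)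
    (Estar : Fin (d + 1) → Module.End K V)
    (hEstar : ∀ i j, Estar i * Estar j = if i = j then Estar i else 0)
    (hEstarRank : ∀ i, Module.finrank K (LinearMap.range (Estar i)) = 1)
    (A : Module.End K V)
    (htri : ∀ i j : Fin (d + 1), 1 < Nat.dist (i : ℕ) (j : ℕ) → Estar i * A * Estar j = 0)
    (hirr : ∀ i j : Fin (d + 1), Nat.dist (i : ℕ) (j : ℕ) = 1 → Estar i * A * Estar j ≠ 0)
    (θ : Fin (d + 1) → K) (hθ : Function.Injective θ)
    (E : Fin (d + 1) → Module.End K V)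
    (hE : ∀ i j, E i * E j = if i = j then E i else 0)
    (hEsum : ∑ i, E i = 1)
    (hA : A = ∑ i, θ i • E i)
    (θstar : Fin (d + 1) → K)
    (Astar : Module.End K V) (hAstar : Astar = ∑ i, θstar i • Estar i) :
    ∀ i j : Fin (d + 1), E i * Astar * E j = 0 ↔ E j * Astar * E i = 0 := by
  classical
  have hEstar0 : ∀ i, Estar i ≠ 0 := fun i h => one_ne_zero <|
    (hEstarRank i).symm.trans (by rw [h, LinearMap.range_zero, finrank_bot])
  obtain ⟨b, hb⟩ := exists_basis_toMatrixAlgEquiv_eq_single (by simpa using hdim) hEstar hEstar0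
  set φ := LinearMap.toMatrixAlgEquiv b
  have hentry := mul_mul_eq_zero_iff_toMatrixAlgEquiv_apply_eq_zero hb A
  obtain ⟨k, hk, hkA⟩ := (φ A).exists_semiconjBy_diagonal_transpose
    (fun i j h => (hentry i j).1 (htri i j h))
    (fun t => mt (hentry _ _).2 (hirr _ _ (by simp [Nat.dist])))
    (fun t => mt (hentry _ _).2 (hirr _ _ (by simp [Nat.dist])))
  have hφAstar : φ Astar = diagonal θstar := by
    simp [hAstar, hb, smul_single, sum_single_eq_diagonal]
  have hφE : ∀ i, φ (E i) = aeval (φ A) (Lagrange.basis Finset.univ θ i) := fun i => by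
    rw [eq_aeval_lagrange_basis hE hEsum hθ i, ← hA]
    exact (aeval_algHom_apply φ.toAlgHom A _).symm
  intro i j
  simp only [← map_eq_zero_iff φ φ.injective, map_mul, hφE, hφAstar]
  exact aeval_mul_diagonal_mul_aeval_eq_zero_comm hk hkA θstar _ _

/-- With the standing assumptions (`A` multiplicity-free with primitive idempotents
`{E_i}`, `A* = Σ θ*_i E*_i`), for `0 ≤ i, j ≤ d` we have
`E_i A* E_j = 0` if and only if `E_j A* E_i = 0`. -/
theorem stmt_12 {K : Type*} [Field K] {d : ℕ} (hd : 1 ≤ d)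
    {V : Type*} [AddCommGroup V] [Module K V] [FiniteDimensional K V]
    (hdim : Module.finrank K V = d + 1)
    (Estar : Fin (d + 1) → Module.End K V)
    (hEstar : ∀ i j, Estar i * Estar j = if i = j then Estar i else 0)
    (hEstarRank : ∀ i, Module.finrank K (LinearMap.range (Estar i)) = 1)
    (A : Module.End K V)
    (htri : ∀ i j : Fin (d + 1), 1 < Nat.dist (i : ℕ) (j : ℕ) → Estar i * A * Estar j = 0)
    (hirr : ∀ i j : Fin (d + 1), Nat.dist (i : ℕ) (j : ℕ) = 1 → Estar i * A * Estar j ≠ 0)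
    (θ : Fin (d + 1) → K) (hθ : Function.Injective θ)
    (E : Fin (d + 1) → Module.End K V)
    (hE : ∀ i j, E i * E j = if i = j then E i else 0)
    (hEne : ∀ i, E i ≠ 0)
    (hEsum : ∑ i, E i = 1)
    (hA : A = ∑ i, θ i • E i)
    (θstar : Fin (d + 1) → K)
    (Astar : Module.End K V) (hAstar : Astar = ∑ i, θstar i • Estar i) :
    ∀ i j : Fin (d + 1), E i * Astar * E j = 0 ↔ E j * Astar * E i = 0 :=
  stmt_12_general hdim Estar hEstar hEstarRank A htri hirr θ hθ E hE hEsum hA θstar Astar hAstar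
end

section
/- Adopt the standing assumptions, and let Δ be the associated graph. Then (A; {E_i}_{i=0}^d; A*; {E*_i}_{i=0}^d) is a Leonard system on V if and only if the edge set of Δ is exactly {{i−1, i} : 1 ≤ i ≤ d} (i.e., Δ is a path in which vertices i−1 and i are adjacent for 1 ≤ i ≤ d). -/
/-!
Only the multiplicity-freeness of `A*` needs an argument. If `E_j A* E_k = 0` whenever
`j > k + 1`, then `E_j A*^m E_0 = 0` for `j > m`, while
`E_m A*^m E_0 = (E_m A* E_{m-1}) ⋯ (E_1 A* E_0)` is nonzero because every factor is nonzero and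
the `E_k` have rank one. Hence `E_N p(A*) E_0` is the leading coefficient of `p` times a nonzero
map for every nonzero polynomial `p` of degree `N ≤ d`, so no such `p` kills `A*`. But if
`θ*_a = θ*_b` with `a ≠ b`, then `∏_{i ≠ b} (X - θ*_i)` has degree `d` and kills
`A* = ∑ θ*_i E*_i`.
-/

open Polynomial Module Submodule

theorem irreducible_tridiagonal_iff {M : Type*} [Zero M] {n : ℕ} (f : Fin n → Fin n → M) :
    (∀ i j : Fin n, (1 < Nat.dist i j → f i j = 0) ∧ (Nat.dist i j = 1 → f i j ≠ 0)) ↔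
      ∀ i j : Fin n, i ≠ j → (f i j ≠ 0 ↔ Nat.dist i j = 1) := by
  have hdist : ∀ i j : Fin n, i ≠ j → 0 < Nat.dist i j := fun i j hij =>
    Nat.pos_of_ne_zero fun h => hij (Fin.ext (Nat.eq_of_dist_eq_zero h))
  refine ⟨fun h i j hij => ⟨fun hf => ?_, (h i j).2⟩,
    fun h i j => ⟨fun hgt => ?_, fun h1 => ?_⟩⟩
  · by_contra h1
    exact hf ((h i j).1 (by have := hdist i j hij; omega))
  · have hij : i ≠ j := fun e => by simp [e] at hgt
    by_contra hf
    have := (h i j hij).1 hf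
    omega
  · have hij : i ≠ j := fun e => by simp [e] at h1
    exact (h i j hij).2 h1

theorem LinearMap.ne_zero_of_finrank_range_eq_one {K V W : Type*} [Field K] [AddCommGroup V]
    [Module K V] [AddCommGroup W] [Module K W] {f : V →ₗ[K] W}
    (hf : finrank K (LinearMap.range f) = 1) : f ≠ 0 := by
  rintro rfl
  rw [LinearMap.range_zero, finrank_bot] at hf
  exact zero_ne_one hf

theorem LinearMap.mul_mul_ne_zero_of_finrank_range_eq_one {K V : Type*} [Field K]
    [AddCommGroup V] [Module K V] {X P Y : Module.End K V}
    (hP : finrank K (LinearMap.range P) = 1) (hXP : X * P ≠ 0) (hPY : P * Y ≠ 0) :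
    X * P * Y ≠ 0 := by
  obtain ⟨v, hv⟩ : ∃ v, P (Y v) ≠ 0 := by
    by_contra! h
    exact hPY (LinearMap.ext h)
  obtain ⟨x, hx⟩ : ∃ x, X (P x) ≠ 0 := by
    by_contra! h
    exact hXP (LinearMap.ext h)
  have hu : (⟨P (Y v), mem_range_self P _⟩ : range P) ≠ 0 := by simpa using hv
  obtain ⟨c, hc⟩ := (finrank_eq_one_iff_of_nonzero' _ hu).mp hP ⟨P x, mem_range_self P x⟩
  replace hc : c • P (Y v) = P x := congrArg Subtype.val hc
  intro h
  apply hx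
  rw [← hc, map_smul]
  simp [← Module.End.mul_apply, ← mul_assoc, h]

namespace OrthogonalIdempotents

variable {K V ι : Type*} [Field K] [AddCommGroup V] [Module K V] [FiniteDimensional K V]
  [Fintype ι] [DecidableEq ι] {e : ι → Module.End K V}

theorem exists_spanning_apply_eq_ite (he : OrthogonalIdempotents e) (hne : ∀ i, e i ≠ 0)
    (hcard : Fintype.card ι = finrank K V) :
    ∃ v : ι → V, (∀ i, v i ≠ 0) ∧ (∀ i j, e i (v j) = if i = j then v j else 0) ∧
      span K (Set.range v) = ⊤ := by
  have : ∀ i, ∃ x, e i x ≠ 0 := fun i => by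
    by_contra! h
    exact hne i (LinearMap.ext h)
  choose x hx using this
  have hev : ∀ i j, e i (e j (x j)) = if i = j then e j (x j) else 0 := fun i j => by
    rw [← Module.End.mul_apply, he.mul_eq]
    split_ifs with h <;> simp [h]
  refine ⟨fun i => e i (x i), hx, hev, ?_⟩
  refine LinearIndependent.span_eq_top_of_card_eq_finrank' ?_ hcard
  refine Fintype.linearIndependent_iff.mpr fun g hg i => ?_
  have := congrArg (e i) hg
  simp only [map_sum, map_smul, hev, smul_ite, smul_zero, Finset.sum_ite_eq, Finset.mem_univ,
    if_true, map_zero] at this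
  exact (smul_eq_zero.mp this).resolve_right (hx i)

theorem complete_of_card_eq_finrank (he : OrthogonalIdempotents e) (hne : ∀ i, e i ≠ 0)
    (hcard : Fintype.card ι = finrank K V) : CompleteOrthogonalIdempotents e := by
  obtain ⟨v, -, hev, hspan⟩ := he.exists_spanning_apply_eq_ite hne hcard
  refine ⟨he, LinearMap.ext_on_range hspan fun j => ?_⟩
  simp [LinearMap.sum_apply, hev]

theorem finrank_range_eq_one_of_card_eq_finrank (he : OrthogonalIdempotents e)
    (hne : ∀ i, e i ≠ 0) (hcard : Fintype.card ι = finrank K V) (i : ι) :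
    finrank K (LinearMap.range (e i)) = 1 := by
  obtain ⟨v, hv, hev, hspan⟩ := he.exists_spanning_apply_eq_ite hne hcard
  suffices LinearMap.range (e i) = K ∙ v i by rw [this, finrank_span_singleton (hv i)]
  refine le_antisymm ?_ ((span_singleton_le_iff_mem _ _).mpr ⟨v i, by simp [hev]⟩)
  rw [LinearMap.range_eq_map, ← hspan, map_le_iff_le_comap, span_le]
  rintro _ ⟨j, rfl⟩
  by_cases h : i = j
  · subst h
    simp [hev, mem_span_singleton_self]
  · simp [hev, h]

end OrthogonalIdempotents

namespace CompleteOrthogonalIdempotents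

variable {K A ι : Type*} [CommRing K] [Ring A] [Algebra K A] [Fintype ι] {e : ι → A}

noncomputable def piAlgHom (he : CompleteOrthogonalIdempotents e) : (ι → K) →ₐ[K] A :=
  AlgHom.ofLinearMap (Fintype.linearCombination K e)
    (by simp [Fintype.linearCombination_apply, he.complete])
    (fun f g => by
      classical
      simp [Fintype.linearCombination_apply, Finset.sum_mul, Finset.mul_sum, he.mul_eq,
        smul_smul, mul_comm])

theorem aeval_sum_smul (he : CompleteOrthogonalIdempotents e) (c : ι → K) (p : K[X]) :
    aeval (∑ i, c i • e i) p = ∑ i, p.eval (c i) • e i := by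
  simpa [piAlgHom, Fintype.linearCombination_apply, aeval_pi_apply₂] using
    aeval_algHom_apply he.piAlgHom c p

theorem injective_of_aeval_ne_zero [IsDomain K] {n : ℕ} {e : Fin (n + 1) → A}
    (he : CompleteOrthogonalIdempotents e) (c : Fin (n + 1) → K)
    (h : ∀ p : K[X], p ≠ 0 → p.natDegree ≤ n → aeval (∑ i, c i • e i) p ≠ 0) :
    Function.Injective c := by
  intro a b hab
  by_contra hne
  set p : K[X] := ∏ i ∈ Finset.univ.erase b, (X - C (c i))
  refine h p (monic_prod_X_sub_C _ _).ne_zero (by simp [p]) ?_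
  rw [he.aeval_sum_smul]
  refine Finset.sum_eq_zero fun i _ => ?_
  obtain ⟨k, hk, hki⟩ : ∃ k ∈ Finset.univ.erase b, c k = c i := by
    by_cases hib : i = b
    · exact ⟨a, by simp [hne], hib ▸ hab⟩
    · exact ⟨i, by simp [hib], rfl⟩
  simp [p, eval_prod, Finset.prod_eq_zero hk, hki]

end CompleteOrthogonalIdempotents

section LowerBand

variable {K V : Type*} [Field K] [AddCommGroup V] [Module K V] {n : ℕ}
  {E : Fin (n + 1) → Module.End K V} {B : Module.End K V}

theorem mul_pow_succ_mul_eq_sum (hE : CompleteOrthogonalIdempotents E) (j : Fin (n + 1))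
    (m : ℕ) : E j * B ^ (m + 1) * E 0 = ∑ k, (E j * B * E k) * (E k * B ^ m * E 0) := by
  calc E j * B ^ (m + 1) * E 0 = E j * B * (∑ k, E k * E k) * B ^ m * E 0 := by
        simp only [(hE.idem _).eq, hE.complete, mul_one, pow_succ', mul_assoc]
    _ = _ := by simp only [Finset.mul_sum, Finset.sum_mul, mul_assoc]

variable (hE : CompleteOrthogonalIdempotents E)
  (hlow : ∀ j k : Fin (n + 1), (k : ℕ) + 1 < j → E j * B * E k = 0)
include hE hlow

theorem mul_pow_mul_eq_zero_of_lt (m : ℕ) (j : Fin (n + 1)) (hmj : m < j) :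
    E j * B ^ m * E 0 = 0 := by
  induction m generalizing j with
  | zero =>
    rw [pow_zero, mul_one]
    exact hE.ortho (Fin.pos_iff_ne_zero.mp hmj)
  | succ m ih =>
    rw [mul_pow_succ_mul_eq_sum hE]
    refine Finset.sum_eq_zero fun k _ => ?_
    rcases lt_or_ge ((k : ℕ) + 1) j with hkj | hkj
    · rw [hlow j k hkj, zero_mul]
    · rw [ih k (by omega), mul_zero]

theorem mul_pow_mul_ne_zero (hrank : ∀ i, finrank K (LinearMap.range (E i)) = 1)
    (hsub : ∀ k : Fin n, E k.succ * B * E k.castSucc ≠ 0) (j : Fin (n + 1)) :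
    E j * B ^ (j : ℕ) * E 0 ≠ 0 := by
  induction j using Fin.induction with
  | zero =>
    rw [Fin.val_zero, pow_zero, mul_one, (hE.idem 0).eq]
    exact LinearMap.ne_zero_of_finrank_range_eq_one (hrank 0)
  | succ k ih =>
    rw [Fin.val_succ, mul_pow_succ_mul_eq_sum hE, Finset.sum_eq_single k.castSucc]
    · have hPY : E k.castSucc * (E k.castSucc * B ^ (k : ℕ) * E 0) ≠ 0 := by
        rwa [← mul_assoc, ← mul_assoc, (hE.idem _).eq]
      simpa only [mul_assoc] using
        LinearMap.mul_mul_ne_zero_of_finrank_range_eq_one (hrank _) (hsub k) hPY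
    · intro i _ hik
      rcases lt_or_gt_of_ne (Fin.val_ne_of_ne hik) with hlt | hgt
      · rw [hlow _ _ (by simp at hlt ⊢; omega), zero_mul]
      · rw [mul_pow_mul_eq_zero_of_lt hE hlow _ _ (by simpa using hgt), mul_zero]
    · simp

theorem aeval_ne_zero_of_natDegree_le (hrank : ∀ i, finrank K (LinearMap.range (E i)) = 1)
    (hsub : ∀ k : Fin n, E k.succ * B * E k.castSucc ≠ 0) (p : K[X]) (hp : p ≠ 0)
    (hdeg : p.natDegree ≤ n) : aeval B p ≠ 0 := by
  set N : Fin (n + 1) := ⟨p.natDegree, by omega⟩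
  have hlead : E N * aeval B p * E 0 = p.leadingCoeff • (E N * B ^ (N : ℕ) * E 0) := by
    rw [aeval_eq_sum_range, Finset.mul_sum, Finset.sum_mul,
      Finset.sum_eq_single_of_mem (N : ℕ) (by simp [N])]
    · simp [N]
    · intro m hm hmN
      have hmN' : m < N := lt_of_le_of_ne (Finset.mem_range_succ_iff.mp hm) hmN
      rw [mul_smul_comm, smul_mul_assoc, mul_pow_mul_eq_zero_of_lt hE hlow m N hmN', smul_zero]
  intro h
  rw [h, mul_zero, zero_mul, eq_comm, smul_eq_zero] at hlead
  exact hlead.elim (leadingCoeff_ne_zero.mpr hp) (mul_pow_mul_ne_zero hE hlow hrank hsub N)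

end LowerBand

/-- Given the standing assumptions, being a Leonard system amounts to the `θ*_i` being distinct
(so that `A*` is multiplicity-free with primitive idempotents `E*_i`) together with the conditions
on `E_i A* E_j`. -/
theorem stmt_13_general {K : Type*} [Field K] {d : ℕ}
    {V : Type*} [AddCommGroup V] [Module K V] [FiniteDimensional K V]
    (hdim : Module.finrank K V = d + 1)
    (Estar : Fin (d + 1) → Module.End K V)
    (hEstar : ∀ i j, Estar i * Estar j = if i = j then Estar i else 0)
    (hEstarRank : ∀ i, Module.finrank K (LinearMap.range (Estar i)) = 1)
    (E : Fin (d + 1) → Module.End K V)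
    (hE : ∀ i j, E i * E j = if i = j then E i else 0)
    (hEne : ∀ i, E i ≠ 0)
    (hEsum : ∑ i, E i = 1)
    (θstar : Fin (d + 1) → K)
    (Astar : Module.End K V) (hAstar : Astar = ∑ i, θstar i • Estar i) :
    (Function.Injective θstar ∧
        ∀ i j : Fin (d + 1),
          (1 < Nat.dist (i : ℕ) (j : ℕ) → E i * Astar * E j = 0) ∧
          (Nat.dist (i : ℕ) (j : ℕ) = 1 → E i * Astar * E j ≠ 0)) ↔
      (∀ i j : Fin (d + 1), i ≠ j →
        (E i * Astar * E j ≠ 0 ↔ Nat.dist (i : ℕ) (j : ℕ) = 1)) := by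
  rw [← irreducible_tridiagonal_iff]
  refine ⟨And.right, fun hband => ⟨?_, hband⟩⟩
  have hcard : Fintype.card (Fin (d + 1)) = finrank K V := by simp [hdim]
  have hEorth := OrthogonalIdempotents.iff_mul_eq.mpr hE
  have hEstarCompl := (OrthogonalIdempotents.iff_mul_eq.mpr hEstar).complete_of_card_eq_finrank
    (fun i => LinearMap.ne_zero_of_finrank_range_eq_one (hEstarRank i)) hcard
  subst hAstar
  refine hEstarCompl.injective_of_aeval_ne_zero θstar fun p hp hdeg =>
    aeval_ne_zero_of_natDegree_le ⟨hEorth, hEsum⟩ (fun j k hkj => (hband j k).1 ?_)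
      (hEorth.finrank_range_eq_one_of_card_eq_finrank hEne hcard) (fun k => (hband _ _).2 ?_)
      p hp hdeg
  · unfold Nat.dist; omega
  · simp [Nat.dist]

/-- With the standing assumptions, the sequence `(A; {E_i}; A*; {E*_i})` is a Leonard
system if and only if the edge set of the graph `Δ` is exactly `{{i−1, i} : 1 ≤ i ≤ d}`.
Here, being a Leonard system amounts (given the standing assumptions) to: `A*` is
multiplicity-free with primitive idempotents `{E*_i}` (i.e. the `θ*_i` are mutually
distinct), and `E_i A* E_j = 0` if `|i−j| > 1`, `E_i A* E_j ≠ 0` if `|i−j| = 1`. -/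
theorem stmt_13 {K : Type*} [Field K] {d : ℕ} (hd : 1 ≤ d)
    {V : Type*} [AddCommGroup V] [Module K V] [FiniteDimensional K V]
    (hdim : Module.finrank K V = d + 1)
    (Estar : Fin (d + 1) → Module.End K V)
    (hEstar : ∀ i j, Estar i * Estar j = if i = j then Estar i else 0)
    (hEstarRank : ∀ i, Module.finrank K (LinearMap.range (Estar i)) = 1)
    (A : Module.End K V)
    (htri : ∀ i j : Fin (d + 1), 1 < Nat.dist (i : ℕ) (j : ℕ) → Estar i * A * Estar j = 0)
    (hirr : ∀ i j : Fin (d + 1), Nat.dist (i : ℕ) (j : ℕ) = 1 → Estar i * A * Estar j ≠ 0)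
    (θ : Fin (d + 1) → K) (hθ : Function.Injective θ)
    (E : Fin (d + 1) → Module.End K V)
    (hE : ∀ i j, E i * E j = if i = j then E i else 0)
    (hEne : ∀ i, E i ≠ 0)
    (hEsum : ∑ i, E i = 1)
    (hA : A = ∑ i, θ i • E i)
    (θstar : Fin (d + 1) → K)
    (Astar : Module.End K V) (hAstar : Astar = ∑ i, θstar i • Estar i) :
    (Function.Injective θstar ∧
        ∀ i j : Fin (d + 1),
          (1 < Nat.dist (i : ℕ) (j : ℕ) → E i * Astar * E j = 0) ∧
          (Nat.dist (i : ℕ) (j : ℕ) = 1 → E i * Astar * E j ≠ 0)) ↔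
      (∀ i j : Fin (d + 1), i ≠ j →
        (E i * Astar * E j ≠ 0 ↔ Nat.dist (i : ℕ) (j : ℕ) = 1)) :=
  stmt_13_general hdim Estar hEstar hEstarRank E hE hEne hEsum θstar Astar hAstar
end

section
/- Adopt the standing assumptions, let Δ be the associated graph, fix a subset S ⊆ {0,1,...,d}, and let U = Σ_{h∈S} E_h V. Then the following are equivalent: (i) A*U ⊆ U; (ii) for all i ∈ S and all j in the complement of S in {0,1,...,d}, the vertices i and j are not adjacent in Δ. -/
/-!
Adjacency in `Δ` is symmetric in a strong sense: `E_i A* E_j = 0` iff `E_j A* E_i = 0`.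
In the basis adapted to the `E*_i`, `A` is tridiagonal with nonzero off-diagonal entries, so a
diagonal matrix `diag D` with nonzero entries symmetrizes it: `A` is self-adjoint for the
nondegenerate form `B(x, y) = Σ D_i x_i y_i`. So is the diagonal `A*`, and so is each `E_i`,
since distinct eigenspaces of a self-adjoint map are `B`-orthogonal. Hence `E_i A* E_j` and
`E_j A* E_i` are adjoint to each other. On the other hand `U` is `A*`-invariant iff
`E_j A* E_i = 0` for all `i ∈ S`, `j ∉ S`.
-/

open Module LinearMap

section Idempotents

variable {R M ι : Type*} [Semiring R] [AddCommMonoid M] [Module R M] [Fintype ι]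
  {E : ι → Module.End R M}

theorem CompleteOrthogonalIdempotents.sum_apply (hE : CompleteOrthogonalIdempotents E) (x : M) :
    ∑ i, E i x = x := by
  simpa using congr($(hE.complete) x)

theorem CompleteOrthogonalIdempotents.mem_sum_range_iff (hE : CompleteOrthogonalIdempotents E)
    (S : Finset ι) (x : M) : x ∈ ∑ h ∈ S, range (E h) ↔ ∀ j ∉ S, E j x = 0 := by
  constructor
  · intro hx j hj
    have hle : ∑ h ∈ S, range (E h) ≤ ker (E j) :=
      Finset.sum_induction _ (· ≤ ker (E j)) (fun _ _ ↦ sup_le) bot_le fun h hh ↦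
        range_le_ker_iff.mpr (hE.ortho (ne_of_mem_of_not_mem hh hj).symm)
    exact hle hx
  · intro hx
    rw [← hE.sum_apply x, ← Finset.sum_subset (Finset.subset_univ S) fun i _ hi ↦ hx i hi]
    exact Submodule.sum_mem _ fun i hi ↦
      Finset.single_le_sum_of_canonicallyOrdered (f := fun h ↦ range (E h)) hi (mem_range_self _ x)

theorem CompleteOrthogonalIdempotents.sum_range_invariant_iff
    (hE : CompleteOrthogonalIdempotents E) (S : Finset ι) (T : Module.End R M) :
    (∀ v ∈ ∑ h ∈ S, range (E h), T v ∈ ∑ h ∈ S, range (E h)) ↔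
      ∀ i ∈ S, ∀ j ∉ S, E j * T * E i = 0 := by
  simp only [hE.mem_sum_range_iff]
  constructor
  · intro hT i hi j hj
    ext x
    refine hT (E i x) (fun k hk ↦ ?_) j hj
    exact congr($(hE.ortho (ne_of_mem_of_not_mem hi hk).symm) x)
  · intro hT v hv j hj
    rw [← hE.sum_apply v, map_sum, map_sum]
    refine Finset.sum_eq_zero fun i _ ↦ ?_
    by_cases hi : i ∈ S
    · exact congr($(hT i hi j hj) v)
    · rw [hv i hi, map_zero, map_zero]

end Idempotents

section Adjoint

variable {R M : Type*} [CommSemiring R] [AddCommMonoid M] [Module R M] {B : M →ₗ[R] M →ₗ[R] R}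

theorem LinearMap.IsAdjointPair.eq_zero_of_eq_zero {f g : Module.End R M}
    (h : IsAdjointPair B B f g) (hB : B.SeparatingLeft) (hg : g = 0) : f = 0 := by
  ext x
  exact hB _ fun y ↦ by rw [h, hg, zero_apply, map_zero]

theorem mul_mul_eq_zero_iff_of_isAdjointPair (hB : B.SeparatingLeft) {P Q T : Module.End R M}
    (hP : IsAdjointPair B B P P) (hQ : IsAdjointPair B B Q Q) (hT : IsAdjointPair B B T T) :
    P * T * Q = 0 ↔ Q * T * P = 0 :=
  ⟨((hQ.mul hT).mul hP).eq_zero_of_eq_zero hB, ((hP.mul hT).mul hQ).eq_zero_of_eq_zero hB⟩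

end Adjoint

theorem CompleteOrthogonalIdempotents.isAdjointPair {R M ι : Type*} [CommRing R] [NoZeroDivisors R]
    [AddCommMonoid M] [Module R M] [Fintype ι] {B : M →ₗ[R] M →ₗ[R] R}
    {E : ι → Module.End R M} {θ : ι → R} (hE : CompleteOrthogonalIdempotents E)
    (hθ : Function.Injective θ)
    (hA : IsAdjointPair B B ⇑(∑ i, θ i • E i) ⇑(∑ i, θ i • E i)) (i : ι) :
    IsAdjointPair B B (E i) (E i) := by
  classical
  have hAE (i : ι) (x : M) : (∑ k, θ k • E k) (E i x) = θ i • E i x := by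
    rw [← Module.End.mul_apply, Finset.sum_mul]
    simp [hE.mul_eq]
  have hortho {i j : ι} (hij : i ≠ j) (x y : M) : B (E i x) (E j y) = 0 := by
    have : θ i * B (E i x) (E j y) = θ j * B (E i x) (E j y) := by
      simpa [hAE] using hA (E i x) (E j y)
    exact (mul_eq_mul_right_iff.mp this).resolve_left (hθ.ne hij)
  intro x y
  calc B (E i x) y = B (E i x) (E i y) := by
        conv_lhs => rw [← hE.sum_apply y]
        rw [map_sum, Finset.sum_eq_single i (fun j _ hj ↦ hortho hj.symm x y) (by simp)]
    _ = B x (E i y) := by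
        conv_rhs => rw [← hE.sum_apply x]
        rw [map_sum₂, Finset.sum_eq_single i (fun j _ hj ↦ hortho hj x y) (by simp)]

theorem OrthogonalIdempotents.exists_basis_of_finrank_range_eq_one {K V ι : Type*} [Field K]
    [AddCommGroup V] [Module K V] [FiniteDimensional K V] [Fintype ι] {P : ι → Module.End K V}
    (hP : OrthogonalIdempotents P) (hrank : ∀ i, finrank K (range (P i)) = 1)
    (hcard : Fintype.card ι = finrank K V) :
    ∃ b : Basis ι K V, ∀ i x, P i x = b.repr x i • b i := by
  classical
  have hne_bot (i : ι) : range (P i) ≠ ⊥ := by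
    rw [Ne, ← Submodule.finrank_eq_zero, hrank i]
    exact one_ne_zero
  choose v hv_mem hv_ne using fun i ↦ Submodule.exists_mem_ne_zero_of_ne_bot (hne_bot i)
  have hPv (i j : ι) : P i (v j) = if i = j then v j else 0 := by
    obtain ⟨w, hw⟩ := hv_mem j
    rw [← hw, ← Module.End.mul_apply, hP.mul_eq]
    split_ifs <;> simp_all
  have hli : LinearIndependent K v := by
    rw [Fintype.linearIndependent_iff]
    intro g hg i
    simpa [hPv, hv_ne] using congr(P i $hg)
  let b := Basis.mk hli (hli.span_eq_top_of_card_eq_finrank' hcard).ge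
  have hbv : ⇑b = v := Basis.coe_mk _ _
  refine ⟨b, fun i x ↦ ?_⟩
  conv_lhs => rw [← b.sum_repr x]
  simp [hbv, hPv]

section Coordinates

variable {R M ι : Type*} [Fintype ι] [DecidableEq ι] [CommSemiring R] [AddCommMonoid M]
  [Module R M]

theorem LinearMap.mul_mul_eq_zero_iff_toMatrix_apply_eq_zero {b : Basis ι R M}
    {P : ι → Module.End R M} (hb : ∀ i x, P i x = b.repr x i • b i) (f : Module.End R M) (i j : ι) :
    P i * f * P j = 0 ↔ toMatrix b b f i j = 0 := by
  rw [toMatrix_apply]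
  constructor
  · intro h
    simpa [hb] using congr(b.repr ($h (b j)) i)
  · intro h
    ext x
    simp [hb, h]

theorem LinearMap.toMatrix_sum_smul_eq_diagonal {b : Basis ι R M} {P : ι → Module.End R M}
    (hb : ∀ i x, P i x = b.repr x i • b i) (c : ι → R) :
    toMatrix b b (∑ k, c k • P k) = Matrix.diagonal c := by
  ext i j
  rcases eq_or_ne i j with rfl | hij
  · simp [toMatrix_apply, hb, Finsupp.single_apply]
  · simp [toMatrix_apply, hb, Finsupp.single_apply, hij]

end Coordinates

section DiagonalForm

variable {R M ι : Type*} [Fintype ι] [DecidableEq ι] [CommRing R] [AddCommMonoid M] [Module R M]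

theorem isAdjointPair_toLinearMap₂_diagonal {b : Basis ι R M} (D : ι → R) {f : Module.End R M}
    (hf : ∀ i j, D i * toMatrix b b f i j = D j * toMatrix b b f j i) :
    IsAdjointPair (Matrix.toLinearMap₂ b b (Matrix.diagonal D))
      (Matrix.toLinearMap₂ b b (Matrix.diagonal D)) f f := by
  rw [← Matrix.toLin_toMatrix b b f, isAdjointPair_toLinearMap₂]
  ext i j
  simp [hf, mul_comm]

theorem separatingLeft_toLinearMap₂_diagonal [IsDomain R] (b : Basis ι R M) {D : ι → R}
    (hD : ∀ i, D i ≠ 0) : (Matrix.toLinearMap₂ b b (Matrix.diagonal D)).SeparatingLeft := by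
  refine separatingLeft_of_det_ne_zero b ?_
  rw [toMatrix₂_toLinearMap₂, Matrix.det_diagonal]
  exact Finset.prod_ne_zero_iff.mpr fun i _ ↦ hD i

end DiagonalForm

theorem Matrix.exists_symmetrizing_weights_of_tridiagonal {K : Type*} [Field K] {n : ℕ}
    (a : Matrix (Fin (n + 1)) (Fin (n + 1)) K)
    (hzero : ∀ i j : Fin (n + 1), 1 < Nat.dist i j → a i j = 0)
    (hne : ∀ i j : Fin (n + 1), Nat.dist i j = 1 → a i j ≠ 0) :
    ∃ D : Fin (n + 1) → K, (∀ i, D i ≠ 0) ∧ ∀ i j, D i * a i j = D j * a j i := by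
  have hup (k : Fin n) : a k.castSucc k.succ ≠ 0 := hne _ _ (by simp [Nat.dist])
  have hdown (k : Fin n) : a k.succ k.castSucc ≠ 0 := hne _ _ (by simp [Nat.dist])
  let D : Fin (n + 1) → K :=
    Fin.induction 1 fun k Dk ↦ Dk * a k.castSucc k.succ / a k.succ k.castSucc
  have hD_succ (k : Fin n) : D k.succ = D k.castSucc * a k.castSucc k.succ / a k.succ k.castSucc :=
    Fin.induction_succ ..
  have hD_ne : ∀ i, D i ≠ 0 := Fin.induction (by simp [D]) fun k hk ↦ by
    rw [hD_succ]
    exact div_ne_zero (mul_ne_zero hk (hup k)) (hdown k)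
  have hsucc (i j : Fin (n + 1)) (hij : (j : ℕ) = i + 1) : D i * a i j = D j * a j i := by
    obtain ⟨k, rfl, rfl⟩ : ∃ k : Fin n, i = k.castSucc ∧ j = k.succ :=
      ⟨⟨i, by omega⟩, rfl, Fin.ext (by simp [hij])⟩
    rw [hD_succ, div_mul_cancel₀ _ (hdown k)]
  refine ⟨D, hD_ne, fun i j ↦ ?_⟩
  rcases lt_trichotomy (Nat.dist i j) 1 with h | h | h
  · obtain rfl : i = j := Fin.ext (Nat.eq_of_dist_eq_zero (by omega))
    rfl
  · rcases (by simp [Nat.dist] at h; omega : (j : ℕ) = i + 1 ∨ (i : ℕ) = j + 1) with h' | h'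
    · exact hsucc i j h'
    · exact (hsucc j i h').symm
  · rw [hzero i j h, hzero j i (Nat.dist_comm i j ▸ h), mul_zero, mul_zero]

theorem stmt_16_general {K : Type*} [Field K] {d : ℕ}
    {V : Type*} [AddCommGroup V] [Module K V] [FiniteDimensional K V]
    (hdim : Module.finrank K V = d + 1)
    (Estar : Fin (d + 1) → Module.End K V)
    (hEstar : ∀ i j, Estar i * Estar j = if i = j then Estar i else 0)
    (hEstarRank : ∀ i, Module.finrank K (LinearMap.range (Estar i)) = 1)
    (A : Module.End K V)
    (htri : ∀ i j : Fin (d + 1), 1 < Nat.dist (i : ℕ) (j : ℕ) → Estar i * A * Estar j = 0)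
    (hirr : ∀ i j : Fin (d + 1), Nat.dist (i : ℕ) (j : ℕ) = 1 → Estar i * A * Estar j ≠ 0)
    (θ : Fin (d + 1) → K) (hθ : Function.Injective θ)
    (E : Fin (d + 1) → Module.End K V)
    (hE : ∀ i j, E i * E j = if i = j then E i else 0)
    (hEsum : ∑ i, E i = 1)
    (hA : A = ∑ i, θ i • E i)
    (θstar : Fin (d + 1) → K)
    (Astar : Module.End K V) (hAstar : Astar = ∑ i, θstar i • Estar i)
    (S : Finset (Fin (d + 1)))
    (U : Submodule K V) (hU : U = ∑ h ∈ S, LinearMap.range (E h)) :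
    (∀ v ∈ U, Astar v ∈ U) ↔
      ∀ i ∈ S, ∀ j ∉ S, ¬(i ≠ j ∧ E i * Astar * E j ≠ 0) := by
  have hEc : CompleteOrthogonalIdempotents E := ⟨OrthogonalIdempotents.iff_mul_eq.mpr hE, hEsum⟩
  obtain ⟨b, hb⟩ := (OrthogonalIdempotents.iff_mul_eq.mpr hEstar)
    |>.exists_basis_of_finrank_range_eq_one hEstarRank (by simp [hdim])
  have hentry := mul_mul_eq_zero_iff_toMatrix_apply_eq_zero hb A
  obtain ⟨D, hD_ne, hDA⟩ := (toMatrix b b A).exists_symmetrizing_weights_of_tridiagonal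
    (fun i j h ↦ (hentry i j).mp (htri i j h)) (fun i j h ↦ mt (hentry i j).mpr (hirr i j h))
  let B := Matrix.toLinearMap₂ b b (Matrix.diagonal D)
  have hA_adj : IsAdjointPair B B A A := isAdjointPair_toLinearMap₂_diagonal D hDA
  have hAstar_adj : IsAdjointPair B B Astar Astar := isAdjointPair_toLinearMap₂_diagonal D
    fun i j ↦ by
      rw [hAstar, toMatrix_sum_smul_eq_diagonal hb]
      rcases eq_or_ne i j with rfl | hij
      · rfl
      · simp [hij, hij.symm]
  have hE_adj := hEc.isAdjointPair hθ (hA ▸ hA_adj)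
  have hsymm (i j) := mul_mul_eq_zero_iff_of_isAdjointPair
    (separatingLeft_toLinearMap₂_diagonal b hD_ne) (hE_adj i) (hE_adj j) hAstar_adj
  rw [hU, hEc.sum_range_invariant_iff]
  refine forall₂_congr fun i hi ↦ forall₂_congr fun j hj ↦ ?_
  simp [hsymm, ne_of_mem_of_not_mem hi hj]

/-- With the standing assumptions, fix `S ⊆ {0,…,d}` and let `U = Σ_{h∈S} E_h V`.
Then `A* U ⊆ U` iff for all `i ∈ S` and `j ∉ S`, the vertices `i, j` are not
adjacent in the graph `Δ`. -/
theorem stmt_16 {K : Type*} [Field K] {d : ℕ} (hd : 1 ≤ d)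
    {V : Type*} [AddCommGroup V] [Module K V] [FiniteDimensional K V]
    (hdim : Module.finrank K V = d + 1)
    (Estar : Fin (d + 1) → Module.End K V)
    (hEstar : ∀ i j, Estar i * Estar j = if i = j then Estar i else 0)
    (hEstarRank : ∀ i, Module.finrank K (LinearMap.range (Estar i)) = 1)
    (A : Module.End K V)
    (htri : ∀ i j : Fin (d + 1), 1 < Nat.dist (i : ℕ) (j : ℕ) → Estar i * A * Estar j = 0)
    (hirr : ∀ i j : Fin (d + 1), Nat.dist (i : ℕ) (j : ℕ) = 1 → Estar i * A * Estar j ≠ 0)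
    (θ : Fin (d + 1) → K) (hθ : Function.Injective θ)
    (E : Fin (d + 1) → Module.End K V)
    (hE : ∀ i j, E i * E j = if i = j then E i else 0)
    (hEne : ∀ i, E i ≠ 0)
    (hEsum : ∑ i, E i = 1)
    (hA : A = ∑ i, θ i • E i)
    (θstar : Fin (d + 1) → K)
    (Astar : Module.End K V) (hAstar : Astar = ∑ i, θstar i • Estar i)
    (S : Finset (Fin (d + 1)))
    (U : Submodule K V) (hU : U = ∑ h ∈ S, LinearMap.range (E h)) :
    (∀ v ∈ U, Astar v ∈ U) ↔
      ∀ i ∈ S, ∀ j ∉ S, ¬(i ≠ j ∧ E i * Astar * E j ≠ 0) :=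
  stmt_16_general hdim Estar hEstar hEstarRank A htri hirr θ hθ E hE hEsum hA θstar Astar hAstar S U
    hU
end

section
/- Adopt the standing assumptions and suppose there exist β, γ* ∈ K such that θ*_{i−1} − β θ*_i + θ*_{i+1} = γ* for 1 ≤ i ≤ d−1. Then the expression θ*_{i−1}² − β θ*_{i−1} θ*_i + θ*_i² − γ*(θ*_{i−1} + θ*_i) is independent of i for 1 ≤ i ≤ d; and, denoting its common value by δ*, the following identity holds in End(V): 0 = [A*, A*²A − β A* A A* + A A*² − γ*(A A* + A* A) − δ* A], where [x, y] = xy − yx. -/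
/-!
Put `q(x, y) = x² − βxy + y² − γ*(x + y)`. The three-term recurrence gives
`q(y, z) − q(x, y) = (z − x)(x − βy + z − γ*) = 0`, so `q` takes one value `δ*` on all consecutive
pairs `(θ*_{i-1}, θ*_i)`. Sandwiching between `E*_i` and `E*_j` turns `A*` into scalars, so the
commutator `C` satisfies `E*_i C E*_j = (θ*_i − θ*_j)(q(θ*_i, θ*_j) − δ*) E*_i A E*_j`, which vanishes
for `i = j`, for `|i − j| > 1` by tridiagonality, and for `|i − j| = 1` by the choice of `δ*`.
Finally `∑ E*_i = 1`, because `d + 1` nonzero orthogonal idempotents in dimension `d + 1` leave no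
room for a complement, hence `C = 0`.
-/

universe u v w

section Scalars

variable {K : Type u} [CommRing K] (β γ : K)

def tdQuad (x y : K) : K := x ^ 2 - β * x * y + y ^ 2 - γ * (x + y)

theorem tdQuad_comm (x y : K) : tdQuad β γ x y = tdQuad β γ y x := by
  unfold tdQuad; ring

theorem tdQuad_eq_tdQuad_of_recurrence {x y z : K} (h : x - β * y + z = γ) :
    tdQuad β γ y z = tdQuad β γ x y := by
  unfold tdQuad; linear_combination (z - x) * h

theorem tdQuad_eq_tdQuad_zero_one_of_recurrence {t : ℕ → K} {n : ℕ}
    (hrec : ∀ i, i + 2 ≤ n → t i - β * t (i + 1) + t (i + 2) = γ) :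
    ∀ i, i + 1 ≤ n → tdQuad β γ (t i) (t (i + 1)) = tdQuad β γ (t 0) (t 1)
  | 0, _ => rfl
  | i + 1, hi => by
    rw [tdQuad_eq_tdQuad_of_recurrence β γ (hrec i hi),
      tdQuad_eq_tdQuad_zero_one_of_recurrence hrec i (by omega)]

variable {β γ}

theorem exists_tdQuad_eq_of_recurrence {d : ℕ} (θ : Fin (d + 1) → K)
    (hrec : ∀ i : ℕ, ∀ _h1 : 1 ≤ i, ∀ _h2 : i ≤ d - 1,
      θ ⟨i - 1, by omega⟩ - β * θ ⟨i, by omega⟩ + θ ⟨i + 1, by omega⟩ = γ) :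
    ∃ δ : K, ∀ i : ℕ, ∀ _h1 : 1 ≤ i, ∀ _h2 : i ≤ d,
      tdQuad β γ (θ ⟨i - 1, by omega⟩) (θ ⟨i, by omega⟩) = δ := by
  set t : ℕ → K := fun k => if hk : k < d + 1 then θ ⟨k, hk⟩ else 0
  have ht : ∀ k (hk : k < d + 1), θ ⟨k, hk⟩ = t k := fun k hk => by simp only [t, dif_pos hk]
  refine ⟨tdQuad β γ (t 0) (t 1), fun i h1 h2 => ?_⟩
  obtain ⟨k, rfl⟩ : ∃ k, i = k + 1 := ⟨i - 1, by omega⟩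
  simp only [ht, Nat.add_sub_cancel]
  refine tdQuad_eq_tdQuad_zero_one_of_recurrence β γ (fun j hj => ?_) k h2
  simpa only [ht, Nat.add_sub_cancel] using hrec (j + 1) (by omega) (by omega)

theorem tdQuad_eq_of_natDist_eq_one {d : ℕ} {θ : Fin (d + 1) → K} {δ : K}
    (hconst : ∀ i : ℕ, ∀ _h1 : 1 ≤ i, ∀ _h2 : i ≤ d,
      tdQuad β γ (θ ⟨i - 1, by omega⟩) (θ ⟨i, by omega⟩) = δ)
    {i j : Fin (d + 1)} (hij : Nat.dist i j = 1) : tdQuad β γ (θ i) (θ j) = δ := by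
  have hadj : ∀ a b : Fin (d + 1), (a : ℕ) + 1 = b → tdQuad β γ (θ a) (θ b) = δ := by
    rintro ⟨a, ha⟩ ⟨b, hb⟩ (rfl : a + 1 = b)
    simpa using hconst (a + 1) (by omega) (by omega)
  rcases (by simp only [Nat.dist] at hij; omega : (i : ℕ) + 1 = j ∨ (j : ℕ) + 1 = i) with h | h
  · exact hadj i j h
  · rw [tdQuad_comm]; exact hadj j i h

end Scalars

section Algebra

variable {K : Type u} {R : Type v} [CommRing K] [Ring R] [Algebra K R]

-- With `a = A` and `s = A*`, the second entry of the commutator in the theorem.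
def tdExpr (β γ δ : K) (a s : R) : R :=
  s ^ 2 * a - β • (s * a * s) + a * s ^ 2 - γ • (a * s + s * a) - δ • a

variable {e f s : R} {x y : K}

theorem mul_commutator_mul (he : e * s = x • e) (hf : s * f = y • f) (c : R) :
    e * (s * c - c * s) * f = (x - y) • (e * c * f) := by
  rw [show e * (s * c - c * s) * f = e * s * c * f - e * c * (s * f) by noncomm_ring, he, hf,
    smul_mul_assoc, smul_mul_assoc, mul_smul_comm, sub_smul]

theorem mul_tdExpr_mul (he : e * s = x • e) (hf : s * f = y • f) (β γ δ : K) (a : R) :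
    e * tdExpr β γ δ a s * f = (tdQuad β γ x y - δ) • (e * a * f) := by
  have hl : ∀ b, e * (s * b) = x • (e * b) := fun b => by rw [← mul_assoc, he, smul_mul_assoc]
  simp only [tdExpr, tdQuad, pow_two, mul_sub, sub_mul, mul_add, add_mul, mul_smul_comm,
    smul_mul_assoc, mul_assoc, hl, hf]
  match_scalars
  ring

end Algebra

section Idempotents

variable {K : Type u} {R : Type v} {ι : Type w} [CommRing K] [Ring R] [Algebra K R] [Fintype ι]
  {e : ι → R}

theorem OrthogonalIdempotents.mul_sum_smul (he : OrthogonalIdempotents e) (θ : ι → K) (i : ι) :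
    e i * ∑ j, θ j • e j = θ i • e i := by
  classical
  simp [Finset.mul_sum, he.mul_eq]

theorem OrthogonalIdempotents.sum_smul_mul (he : OrthogonalIdempotents e) (θ : ι → K) (j : ι) :
    (∑ i, θ i • e i) * e j = θ j • e j := by
  classical
  simp [Finset.sum_mul, he.mul_eq]

theorem CompleteOrthogonalIdempotents.eq_zero_of_forall_mul_mul_eq_zero
    (he : CompleteOrthogonalIdempotents e) {x : R} (h : ∀ i j, e i * x * e j = 0) : x = 0 :=
  calc x = (∑ i, e i) * x * ∑ j, e j := by rw [he.complete, one_mul, mul_one]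
    _ = 0 := by simp [Finset.sum_mul, Finset.mul_sum, h]

theorem CompleteOrthogonalIdempotents.commutator_tdExpr_eq_zero
    (he : CompleteOrthogonalIdempotents e) {θ : ι → K} {s : R} (hs : s = ∑ i, θ i • e i)
    {β γ δ : K} {a : R}
    (hq : ∀ i j, i ≠ j → e i * a * e j ≠ 0 → tdQuad β γ (θ i) (θ j) = δ) :
    s * tdExpr β γ δ a s - tdExpr β γ δ a s * s = 0 := by
  refine he.eq_zero_of_forall_mul_mul_eq_zero fun i j => ?_
  have hi := hs ▸ he.mul_sum_smul θ i
  have hj := hs ▸ he.sum_smul_mul θ j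
  rw [mul_commutator_mul hi hj, mul_tdExpr_mul hi hj, smul_smul]
  by_cases hij : i = j
  · rw [hij, sub_self, zero_mul, zero_smul]
  by_cases ha : e i * a * e j = 0
  · rw [ha, smul_zero]
  · rw [hq i j hij ha, sub_self, mul_zero, zero_smul]

end Idempotents

section LinearMaps

variable {K : Type u} {V : Type v} {ι : Type w} [DivisionRing K] [AddCommGroup V] [Module K V]
  [Fintype ι] {e : ι → Module.End K V}

theorem OrthogonalIdempotents.linearIndependent_apply (he : OrthogonalIdempotents e) {v : ι → V}
    (hv : ∀ i, e i (v i) ≠ 0) : LinearIndependent K fun i => e i (v i) := by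
  classical
  refine Fintype.linearIndependent_iff.2 fun g hg j => ?_
  have := congrArg (e j) hg
  rw [map_sum, Finset.sum_eq_single j (fun i _ hij => by
      rw [map_smul, ← Module.End.mul_apply, he.ortho hij.symm, LinearMap.zero_apply, smul_zero])
    (by simp), map_smul, ← Module.End.mul_apply, (he.idem j).eq, map_zero] at this
  exact (smul_eq_zero.1 this).resolve_right (hv j)

theorem OrthogonalIdempotents.completeOrthogonalIdempotents_of_card_eq_finrank
    [FiniteDimensional K V] (he : OrthogonalIdempotents e) (hne : ∀ i, e i ≠ 0)
    (hcard : Fintype.card ι = Module.finrank K V) : CompleteOrthogonalIdempotents e := by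
  classical
  have hv : ∀ i, ∃ v, e i v ≠ 0 := fun i => by
    by_contra! h
    exact hne i (LinearMap.ext h)
  choose v hv using hv
  refine ⟨he, LinearMap.ext_on_range
    ((he.linearIndependent_apply hv).span_eq_top_of_card_eq_finrank' hcard) fun j => ?_⟩
  rw [← Module.End.mul_apply, Finset.sum_mul]
  simp [he.mul_eq]

end LinearMaps

theorem stmt_17 {K : Type*} [Field K] {d : ℕ}
    {V : Type*} [AddCommGroup V] [Module K V] [FiniteDimensional K V]
    (hdim : Module.finrank K V = d + 1)
    (Estar : Fin (d + 1) → Module.End K V)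
    (hEstar : ∀ i j, Estar i * Estar j = if i = j then Estar i else 0)
    (hEstarRank : ∀ i, Module.finrank K (LinearMap.range (Estar i)) = 1)
    (A : Module.End K V)
    (htri : ∀ i j : Fin (d + 1), 1 < Nat.dist (i : ℕ) (j : ℕ) → Estar i * A * Estar j = 0)
    (θstar : Fin (d + 1) → K)
    (Astar : Module.End K V) (hAstar : Astar = ∑ i, θstar i • Estar i)
    (β γstar : K)
    (hrec : ∀ i : ℕ, ∀ _h1 : 1 ≤ i, ∀ _h2 : i ≤ d - 1,
      θstar ⟨i - 1, by omega⟩ - β * θstar ⟨i, by omega⟩ + θstar ⟨i + 1, by omega⟩ = γstar) :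
    ∃ δstar : K,
      (∀ i : ℕ, ∀ _h1 : 1 ≤ i, ∀ _h2 : i ≤ d,
        θstar ⟨i - 1, by omega⟩ ^ 2 - β * θstar ⟨i - 1, by omega⟩ * θstar ⟨i, by omega⟩ +
            θstar ⟨i, by omega⟩ ^ 2 -
            γstar * (θstar ⟨i - 1, by omega⟩ + θstar ⟨i, by omega⟩) = δstar) ∧
      0 = Astar * (Astar ^ 2 * A - β • (Astar * A * Astar) + A * Astar ^ 2 -
              γstar • (A * Astar + Astar * A) - δstar • A) -
            (Astar ^ 2 * A - β • (Astar * A * Astar) + A * Astar ^ 2 -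
              γstar • (A * Astar + Astar * A) - δstar • A) * Astar := by
  obtain ⟨δ, hconst⟩ := exists_tdQuad_eq_of_recurrence θstar hrec
  have hE : CompleteOrthogonalIdempotents Estar :=
    (OrthogonalIdempotents.iff_mul_eq.2 hEstar).completeOrthogonalIdempotents_of_card_eq_finrank
      (fun i h => one_ne_zero <| by rw [← hEstarRank i, h, LinearMap.range_zero, finrank_bot])
      (by rw [Fintype.card_fin, hdim])
  refine ⟨δ, hconst, (hE.commutator_tdExpr_eq_zero hAstar fun i j hij hA => ?_).symm⟩
  refine tdQuad_eq_of_natDist_eq_one hconst ?_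
  have hne : Nat.dist i j ≠ 0 := fun h => hij (Fin.ext (Nat.eq_of_dist_eq_zero h))
  have hle : Nat.dist i j ≤ 1 := not_lt.1 (mt (htri i j) hA)
  omega
end
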